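/- arXiv:2603.02018 — 8 statements merged into one kernel-verified Lean document; each statement's English description precedes it below -/
import Mathlib

section
/- Let X be a regular topological space that is scattered. Then X is weakly Whyburn, i.e., for every subset A of X that is not closed there exist a point x in (closure of A) \ A and a subset B of A such that (closure of B) \ B = {x}. -/
/-! Pick a point `x` isolated in `closure A \ A` by an open set `U`, and by regularity a closed
neighbourhood `C ⊆ U` of `x`. Then `B = C ∩ A` works: any `y ∈ closure B \ B` lies in
`C ∩ (closure A \ A) ⊆ U ∩ (closure A \ A) = {x}`. -/

open Set Topology

theorem mem_closure_inter_of_mem_nhds {X : Type*} [TopologicalSpace X] {A C : Set X} {x : X}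
    (hx : x ∈ closure A) (hC : C ∈ 𝓝 x) : x ∈ closure (C ∩ A) :=
  mem_closure_iff_nhds.2 fun t ht => by
    simpa only [inter_assoc] using mem_closure_iff_nhds.1 hx (t ∩ C) (Filter.inter_mem ht hC)

theorem closure_inter_diff_eq_singleton {X : Type*} [TopologicalSpace X] {A C : Set X} {x : X}
    (hx : x ∈ closure A \ A) (hCc : IsClosed C) (hCx : C ∈ 𝓝 x)
    (hCA : C ∩ (closure A \ A) ⊆ {x}) : closure (C ∩ A) \ (C ∩ A) = {x} := by
  refine Subset.antisymm ?_ ?_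
  · rintro y ⟨hyB, hyA⟩
    have hyC : y ∈ C := closure_minimal inter_subset_left hCc hyB
    exact hCA ⟨hyC, closure_mono inter_subset_right hyB, fun h => hyA ⟨hyC, h⟩⟩
  · rintro y rfl
    exact ⟨mem_closure_inter_of_mem_nhds hx.1 hCx, fun h => hx.2 h.2⟩

/-- Every regular scattered space is weakly Whyburn: for every
non-closed set `A` there are `x ∈ closure A \ A` and `B ⊆ A` with
`closure B \ B = {x}`.  Scatteredness is stated as: every nonempty subspace has
an isolated point (in the subspace topology). -/
theorem regular_scattered_weaklyWhyburn {X : Type*} [TopologicalSpace X] [RegularSpace X]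
    (hscat : ∀ S : Set X, S.Nonempty → ∃ x ∈ S, ∃ U : Set X, IsOpen U ∧ U ∩ S = {x})
    (A : Set X) (hA : ¬ IsClosed A) :
    ∃ x ∈ closure A \ A, ∃ B ⊆ A, closure B \ B = {x} := by
  have hS : (closure A \ A).Nonempty :=
    sdiff_nonempty.2 fun h => hA (closure_subset_iff_isClosed.1 h)
  obtain ⟨x, hx, U, hU, hUS⟩ := hscat _ hS
  have hxU : x ∈ U := (hUS.symm.subset (mem_singleton x)).1
  obtain ⟨C, hCx, hCc, hCU⟩ := exists_mem_nhds_isClosed_subset (hU.mem_nhds hxU)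
  refine ⟨x, hx, C ∩ A, inter_subset_right, closure_inter_diff_eq_singleton hx hCc hCx ?_⟩
  exact hUS ▸ inter_subset_inter_left _ hCU
end

section
/- Let X be a pseudocompact and functionally countable topological space. Then for every countably infinite set A of isolated points of X there exist a point p ∈ X and an infinite subset B ⊆ A such that B converges to p, meaning that B \ U is finite for every open neighborhood U of p. -/
/-- A space is pseudocompact if it is completely regular Hausdorff (Tychonoff)
and every continuous real-valued function on it is bounded. -/
def Pseudocompact (X : Type*) [TopologicalSpace X] : Prop :=
  CompletelyRegularSpace X ∧ T2Space X ∧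
    ∀ f : X → ℝ, Continuous f → ∃ M : ℝ, ∀ x, |f x| ≤ M

/-- A space is functionally countable if every continuous real-valued function
on it has countable range. -/
def FunctionallyCountable (X : Type*) [TopologicalSpace X] : Prop :=
  ∀ f : X → ℝ, Continuous f → (Set.range f).Countable

namespace ConvergentAux

open Set Filter Topology

variable {X : Type*} [TopologicalSpace X]

lemma accum_infinite [T1Space X] {B : Set X} {p : X} (hp : p ∈ closure B) (hpB : p ∉ B)
    {V : Set X} (hV : IsOpen V) (hpV : p ∈ V) : (B ∩ V).Infinite := by
  by_contra hfin
  rw [Set.not_infinite] at hfin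
  have hW : IsOpen (V \ (B ∩ V)) := hV.sdiff hfin.isClosed
  have hpW : p ∈ V \ (B ∩ V) := ⟨hpV, fun h => hpB h.1⟩
  rcases mem_closure_iff.1 hp _ hW hpW with ⟨y, hyW, hyB⟩
  exact hyW.2 ⟨hyB, hyW.1⟩

lemma exists_closure_not_mem (hpc : Pseudocompact X) {B : Set X}
    (hiso : ∀ x ∈ B, IsOpen ({x} : Set X)) (hBc : B.Countable) (hBinf : B.Infinite) :
    ∃ p, p ∈ closure B ∧ p ∉ B := by
  classical
  by_contra hcl
  push_neg at hcl
  have hBcl : IsClosed B := isClosed_of_closure_subset fun x hx =>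
    by_contra fun hxB => hxB (hcl x hx)
  haveI := hBc.to_subtype
  haveI := hBinf.to_subtype
  obtain ⟨e⟩ : Nonempty (↥B ≃ ℕ) := nonempty_equiv_of_countable
  set f : X → ℝ := fun x => if h : x ∈ B then (e ⟨x, h⟩ : ℕ) else 0 with hf
  have hfc : Continuous f := by
    rw [continuous_iff_continuousAt]
    intro x
    by_cases hx : x ∈ B
    · have hnb : {x} ∈ 𝓝 x := (hiso x hx).mem_nhds rfl
      have : f =ᶠ[𝓝 x] fun _ => f x := by
        filter_upwards [hnb] with y hy
        rw [mem_singleton_iff] at hy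
        rw [hy]
      exact this.continuousAt
    · have hnb : Bᶜ ∈ 𝓝 x := hBcl.isOpen_compl.mem_nhds hx
      have : f =ᶠ[𝓝 x] fun _ => f x := by
        filter_upwards [hnb] with y hy
        simp only [hf, dif_neg hy, dif_neg hx]
      exact this.continuousAt
  obtain ⟨M, hM⟩ := hpc.2.2 f hfc
  obtain ⟨n, hn⟩ := exists_nat_gt M
  have hfn : f ((e.symm n : ↥B) : X) = n := by
    simp only [hf, dif_pos (e.symm n).2, Subtype.coe_eta, Equiv.apply_symm_apply]
  have h2 := hM ((e.symm n : ↥B) : X)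
  rw [hfn] at h2
  have : (n : ℝ) ≤ M := le_of_abs_le h2
  linarith

lemma exists_split (hpc : Pseudocompact X) {A : Set X}
    (hAiso : ∀ x ∈ A, IsOpen ({x} : Set X)) (hAcount : A.Countable)
    (hnc : ∀ p : X, ∀ B : Set X, B ⊆ A → B.Infinite →
      ∃ U, IsOpen U ∧ p ∈ U ∧ (B \ U).Infinite)
    {B : Set X} (hBA : B ⊆ A) (hBinf : B.Infinite) :
    ∃ (g : X → ℝ) (C D : Set X), Continuous g ∧ (∀ x, 0 ≤ g x) ∧ (∀ x, g x ≤ 1) ∧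
      C ⊆ B ∧ D ⊆ B ∧ C.Infinite ∧ D.Infinite ∧
      (∀ a ∈ C, g a = 0) ∧ (∀ a ∈ D, g a = 1) := by
  haveI : T2Space X := hpc.2.1
  obtain ⟨p, hpcl, hpB⟩ := exists_closure_not_mem hpc
    (fun x hx => hAiso x (hBA hx)) (hAcount.mono hBA) hBinf
  obtain ⟨U, hU, hpU, hCinf⟩ := hnc p B hBA hBinf
  obtain ⟨f, hf, hf0, hf1⟩ := hpc.1.completely_regular p Uᶜ hU.isClosed_compl (by simpa using hpU)
  set g : X → ℝ := fun x => max 0 (min 1 (2 - 4 * ((f x : ℝ)))) with hg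
  have hgc : Continuous g := by
    apply continuous_const.max
    apply continuous_const.min
    exact continuous_const.sub ((continuous_const.mul (continuous_subtype_val.comp hf)))
  refine ⟨g, B \ U, B ∩ {x | (f x : ℝ) < 4⁻¹}, hgc, fun x => le_max_left _ _,
    fun x => max_le zero_le_one (min_le_left _ _), diff_subset, inter_subset_left,
    hCinf, ?_, ?_, ?_⟩
  · apply accum_infinite hpcl hpB
    · exact isOpen_lt (continuous_subtype_val.comp hf) continuous_const
    · show (f p : ℝ) < 4⁻¹
      rw [hf0]
      norm_num
  · intro a ha
    have : f a = 1 := hf1 (by simpa using ha.2)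
    have h1 : (f a : ℝ) = 1 := by rw [this]; rfl
    simp only [hg, h1]
    norm_num
  · intro a ha
    have h1 : (f a : ℝ) < 4⁻¹ := ha.2
    have h0 : (0:ℝ) ≤ (f a : ℝ) := (f a).2.1
    have : min 1 (2 - 4 * ((f a : ℝ))) = 1 := min_eq_left (by linarith)
    simp only [hg, this]
    norm_num

lemma exists_prune {E : Set X} (hE : E.Infinite) (n : ℕ) (G : ℕ → X → ℝ)
    (hG : ∀ k, k < n → ∀ x, 0 ≤ G k x ∧ G k x ≤ 1) {δ : ℝ} (hδ : 0 < δ) :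
    ∃ B, B ⊆ E ∧ B.Infinite ∧ ∀ k, k < n → ∃ c, ∀ a ∈ B, |G k a - c| ≤ δ := by
  induction n with
  | zero => exact ⟨E, Subset.rfl, hE, fun k hk => absurd hk (Nat.not_lt_zero k)⟩
  | succ n IH =>
    obtain ⟨B, hBE, hBinf, hpin⟩ := IH (fun k hk x => hG k (hk.trans (Nat.lt_succ_self n)) x)
    set m := ⌊1/δ⌋₊ with hm
    have hcover : B ⊆ ⋃ i ∈ Finset.range (m+1),
        {a ∈ B | G n a ∈ Icc (i*δ) (i*δ+δ)} := by
      intro a ha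
      have hb := hG n (Nat.lt_succ_self n) a
      set i := ⌊G n a / δ⌋₊ with hi
      have him : i ≤ m := by
        apply Nat.floor_le_floor
        rw [div_le_div_iff_of_pos_right hδ]
        exact hb.2
      have hlow : (i:ℝ) * δ ≤ G n a := by
        have h1 : (i:ℝ) ≤ G n a / δ := Nat.floor_le (div_nonneg hb.1 hδ.le)
        rw [← le_div_iff₀ hδ]
        exact h1
      have hhigh : G n a ≤ i*δ + δ := by
        have h2 : G n a / δ < i + 1 := Nat.lt_floor_add_one _
        have := (div_lt_iff₀ hδ).1 h2
        linarith
      exact mem_biUnion (Finset.mem_range.2 (Nat.lt_succ_of_le him)) ⟨ha, hlow, hhigh⟩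
    have hex : ∃ i ∈ Finset.range (m+1), {a ∈ B | G n a ∈ Icc (i*δ) (i*δ+δ)}.Infinite := by
      by_contra hall
      push_neg at hall
      have : (⋃ i ∈ Finset.range (m+1), {a ∈ B | G n a ∈ Icc (i*δ) (i*δ+δ)}).Finite :=
        Set.Finite.biUnion (Finset.finite_toSet _) (fun i hi => hall i hi)
      exact (hBinf.mono hcover) this
    obtain ⟨i, _, hiinf⟩ := hex
    refine ⟨{a ∈ B | G n a ∈ Icc (i*δ) (i*δ+δ)}, fun a ha => hBE ha.1, hiinf, ?_⟩
    intro k hk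
    rcases Nat.lt_succ_iff_lt_or_eq.1 hk with h | rfl
    · obtain ⟨c, hc⟩ := hpin k h
      exact ⟨c, fun a ha => hc a ha.1⟩
    · refine ⟨(i:ℝ)*δ, fun a ha => ?_⟩
      obtain ⟨h1, h2⟩ := ha.2
      rw [abs_le]
      constructor <;> linarith

set_option maxHeartbeats 1000000 in
lemma key_est (d : ℕ → ℝ) (n : ℕ) (hd2 : ∀ k, |d k| ≤ 2)
    (hdn : ∀ k, k < n → |d k| ≤ 2 * ((8:ℝ)⁻¹^n * 8⁻¹)) :
    |(∑' k, (8:ℝ)⁻¹^k * d k) - (8:ℝ)⁻¹^n * d n| ≤ 2/3 * (8:ℝ)⁻¹^n := by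
  set r : ℝ := 8⁻¹ with hrdef
  have hr0 : (0:ℝ) ≤ r := by norm_num [hrdef]
  have hr1 : r < 1 := by norm_num [hrdef]
  have hgeom : Summable (fun k => r^k) := summable_geometric_of_lt_one hr0 hr1
  have htgeom : ∑' k, r^k = (1-r)⁻¹ := tsum_geometric_of_lt_one hr0 hr1
  have hpow : ∀ k, (0:ℝ) ≤ r ^ k := fun k => pow_nonneg hr0 k
  have habs : ∀ k, |r^k * d k| ≤ 2 * r^k := by
    intro k
    rw [abs_mul, abs_pow, abs_of_nonneg hr0]
    calc r^k * |d k| ≤ r^k * 2 := mul_le_mul_of_nonneg_left (hd2 k) (hpow k)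
    _ = 2 * r^k := by ring
  have hsumnorm : Summable (fun k => |r^k * d k|) :=
    Summable.of_nonneg_of_le (fun k => abs_nonneg _) habs (hgeom.mul_left 2)
  have hsum : Summable (fun k => r^k * d k) := hsumnorm.of_abs
  have hsplit := Summable.sum_add_tsum_nat_add (f := fun k => r^k * d k) (n+1) hsum
  set T := ∑' (k:ℕ), r^(k+(n+1)) * d (k+(n+1)) with hT
  have hrange : ∑ k ∈ Finset.range (n+1), r^k * d k
      = (∑ k ∈ Finset.range n, r^k * d k) + r^n * d n := Finset.sum_range_succ _ n
  have hmain : (∑' k, r^k * d k) - r^n * d n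
      = (∑ k ∈ Finset.range n, r^k * d k) + T := by
    rw [← hsplit, hrange]; ring
  have hb1 : |∑ k ∈ Finset.range n, r^k * d k| ≤ (2 * (r^n * 8⁻¹)) * (1-r)⁻¹ := by
    calc |∑ k ∈ Finset.range n, r^k * d k| ≤ ∑ k ∈ Finset.range n, |r^k * d k| :=
          Finset.abs_sum_le_sum_abs _ _
    _ ≤ ∑ k ∈ Finset.range n, (2 * (r^n * 8⁻¹)) * r^k := by
          apply Finset.sum_le_sum
          intro k hk
          rw [abs_mul, abs_pow, abs_of_nonneg hr0]
          calc r^k * |d k| ≤ r^k * (2 * (r^n * 8⁻¹)) :=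
                mul_le_mul_of_nonneg_left (hdn k (Finset.mem_range.1 hk)) (hpow k)
          _ = (2 * (r^n * 8⁻¹)) * r^k := by ring
    _ = (2 * (r^n * 8⁻¹)) * ∑ k ∈ Finset.range n, r^k := by
          rw [Finset.mul_sum]
    _ ≤ (2 * (r^n * 8⁻¹)) * (1-r)⁻¹ := by
          apply mul_le_mul_of_nonneg_left _ (by positivity)
          rw [← htgeom]
          exact Summable.sum_le_tsum (Finset.range n) (fun k _ => hpow k) hgeom
  have hle : ∀ k : ℕ, |r^(k+(n+1)) * d (k+(n+1))| ≤ (2 * r^(n+1)) * r^k := by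
    intro k
    calc |r^(k+(n+1)) * d (k+(n+1))| ≤ 2 * r^(k+(n+1)) := habs _
    _ = (2 * r^(n+1)) * r^k := by rw [pow_add]; ring
  have hsn : Summable (fun k => |r^(k+(n+1)) * d (k+(n+1))|) :=
    (summable_nat_add_iff (n+1)).2 hsumnorm
  have h1 : |T| ≤ ∑' (k:ℕ), |r^(k+(n+1)) * d (k+(n+1))| := by
    have := norm_tsum_le_tsum_norm (f := fun k => r^(k+(n+1)) * d (k+(n+1)))
      (by simpa only [Real.norm_eq_abs] using hsn)
    simpa only [Real.norm_eq_abs] using this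
  have h2 : (∑' (k:ℕ), |r^(k+(n+1)) * d (k+(n+1))|) ≤ ∑' (k:ℕ), (2*r^(n+1))*r^k :=
    Summable.tsum_le_tsum hle hsn (hgeom.mul_left _)
  have h3 : (∑' (k:ℕ), (2*r^(n+1))*r^k) = (2*r^(n+1)) * (1-r)⁻¹ := by
    rw [tsum_mul_left, htgeom]
  have hb2 : |T| ≤ (2 * r^(n+1)) * (1-r)⁻¹ := by
    rw [← h3]
    exact h1.trans h2
  calc |(∑' k, r^k * d k) - r^n * d n| = |(∑ k ∈ Finset.range n, r^k * d k) + T| := by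
        rw [hmain]
  _ ≤ |∑ k ∈ Finset.range n, r^k * d k| + |T| := abs_add_le _ _
  _ ≤ (2 * (r^n * 8⁻¹)) * (1-r)⁻¹ + (2 * r^(n+1)) * (1-r)⁻¹ := add_le_add hb1 hb2
  _ ≤ 2/3 * r^n := by
        have h8 : ((1:ℝ)-r)⁻¹ = 8/7 := by norm_num [hrdef]
        rw [h8, pow_succ, hrdef]
        have hp : (0:ℝ) ≤ 8⁻¹ ^ n := by positivity
        nlinarith [hp]

structure ConvNode (X : Type*) where
  B : Set X
  g : X → ℝ
  C : Set X
  D : Set X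

structure CNodeOK (A : Set X) (N : ConvNode X) : Prop where
  BA : N.B ⊆ A
  Binf : N.B.Infinite
  gcont : Continuous N.g
  g0 : ∀ x, 0 ≤ N.g x
  g1 : ∀ x, N.g x ≤ 1
  CB : N.C ⊆ N.B
  DB : N.D ⊆ N.B
  Cinf : N.C.Infinite
  Dinf : N.D.Infinite
  gC : ∀ a ∈ N.C, N.g a = 0
  gD : ∀ a ∈ N.D, N.g a = 1

noncomputable def mkCNode (sf : Set X → (X → ℝ) × Set X × Set X) (B : Set X) :
    ConvNode X :=
  ⟨B, (sf B).1, (sf B).2.1, (sf B).2.2⟩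

noncomputable def cnodes (A : Set X) (sf : Set X → (X → ℝ) × Set X × Set X)
    (pf : Set X → ℕ → (ℕ → X → ℝ) → Set X) : ℕ → ConvNode X
  | 0 => mkCNode sf A
  | n+1 =>
    mkCNode sf (pf (if n % 2 = 0 then (cnodes A sf pf (n/2)).C else (cnodes A sf pf (n/2)).D)
      (n+1) (fun k => if _h : k < n+1 then (cnodes A sf pf k).g else fun _ => 0))
  termination_by n => n
  decreasing_by all_goals omega

theorem cnodes_spec (A : Set X)
    (sf : Set X → (X → ℝ) × Set X × Set X) (pf : Set X → ℕ → (ℕ → X → ℝ) → Set X)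
    (hA : A.Infinite)
    (hsf : ∀ B : Set X, B ⊆ A → B.Infinite → CNodeOK A (mkCNode sf B))
    (hpf : ∀ (E : Set X) (n : ℕ) (G : ℕ → X → ℝ), E.Infinite →
      (∀ k, k < n → ∀ x, 0 ≤ G k x ∧ G k x ≤ 1) →
      pf E n G ⊆ E ∧ (pf E n G).Infinite ∧
        ∀ k, k < n → ∃ c, ∀ a ∈ pf E n G, |G k a - c| ≤ (8:ℝ)⁻¹^n * 8⁻¹) :
    ∀ n, CNodeOK A (cnodes A sf pf n) ∧
      (∀ k, k < n → ∃ c, ∀ a ∈ (cnodes A sf pf n).B,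
        |(cnodes A sf pf k).g a - c| ≤ (8:ℝ)⁻¹^n * 8⁻¹) ∧
      (∀ j, n = 2*j+1 → (cnodes A sf pf n).B ⊆ (cnodes A sf pf j).C) ∧
      (∀ j, n = 2*j+2 → (cnodes A sf pf n).B ⊆ (cnodes A sf pf j).D) := by
  intro n
  induction n using Nat.strong_induction_on with
  | _ n IH =>
    match n with
    | 0 =>
      refine ⟨?_, fun k hk => absurd hk (Nat.not_lt_zero k), fun j hj => by omega,
        fun j hj => by omega⟩
      rw [cnodes]
      exact hsf A Subset.rfl hA
    | n+1 =>
      have hpar := IH (n/2) (by omega)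
      set P := cnodes A sf pf (n/2) with hP
      set E := if n % 2 = 0 then P.C else P.D with hE
      have hEinf : E.Infinite := by
        rw [hE]; split
        · exact hpar.1.Cinf
        · exact hpar.1.Dinf
      have hEB : E ⊆ P.B := by
        rw [hE]; split
        · exact hpar.1.CB
        · exact hpar.1.DB
      have hEA : E ⊆ A := hEB.trans hpar.1.BA
      set G := fun k => if _h : k < n+1 then (cnodes A sf pf k).g else fun _ => (0:ℝ) with hG
      have hGok : ∀ k, k < n+1 → ∀ x, 0 ≤ G k x ∧ G k x ≤ 1 := by
        intro k hk x
        simp only [hG, dif_pos hk]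
        exact ⟨(IH k hk).1.g0 x, (IH k hk).1.g1 x⟩
      obtain ⟨hsub, hinf, hpin⟩ := hpf E (n+1) G hEinf hGok
      have hnodes : cnodes A sf pf (n+1) = mkCNode sf (pf E (n+1) G) := by
        rw [cnodes]
      have hBeq : (cnodes A sf pf (n+1)).B = pf E (n+1) G := by rw [hnodes]; rfl
      refine ⟨?_, ?_, ?_, ?_⟩
      · rw [hnodes]; exact hsf _ (hsub.trans hEA) hinf
      · intro k hk
        obtain ⟨c, hc⟩ := hpin k hk
        refine ⟨c, fun a ha => ?_⟩
        have := hc a (by rwa [hBeq] at ha)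
        simpa only [hG, dif_pos hk] using this
      · intro j hj
        have hj2 : n / 2 = j := by omega
        have hpar2 : E = P.C := by rw [hE, if_pos (by omega : n % 2 = 0)]
        rw [hBeq, ← hj2, ← hP, ← hpar2]
        exact hsub
      · intro j hj
        have hj2 : n / 2 = j := by omega
        have hpar2 : E = P.D := by rw [hE, if_neg (by omega : ¬ n % 2 = 0)]
        rw [hBeq, ← hj2, ← hP, ← hpar2]
        exact hsub

/-- heap-style branch index -/
def bidx (σ : ℕ → Bool) : ℕ → ℕ
  | 0 => 0
  | j+1 => 2 * bidx σ j + 1 + (if σ j then 1 else 0)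

lemma bidx_ge (σ : ℕ → Bool) : ∀ j, j ≤ bidx σ j := by
  intro j
  induction j with
  | zero => exact Nat.zero_le _
  | succ j IHj =>
    simp only [bidx]
    split <;> omega

lemma bidx_congr (σ τ : ℕ → Bool) : ∀ j, (∀ i, i < j → σ i = τ i) → bidx σ j = bidx τ j := by
  intro j
  induction j with
  | zero => intro _; rfl
  | succ j IHj =>
    intro h
    simp only [bidx]
    rw [IHj (fun i hi => h i (hi.trans (Nat.lt_succ_self j))), h j (Nat.lt_succ_self j)]

end ConvergentAux

open ConvergentAux Set Filter Topology in
set_option maxHeartbeats 2000000 in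
/-- In a pseudocompact functionally countable space, every
countably infinite set of isolated points has an infinite subset converging to
some point. -/
theorem exists_convergent_subset_of_pseudocompact_functionallyCountable
    {X : Type*} [TopologicalSpace X]
    (hpc : Pseudocompact X) (hfc : FunctionallyCountable X)
    (A : Set X) (hAiso : ∀ x ∈ A, IsOpen ({x} : Set X))
    (hAcount : A.Countable) (hAinf : A.Infinite) :
    ∃ p : X, ∃ B ⊆ A, B.Infinite ∧
      ∀ U : Set X, IsOpen U → p ∈ U → (B \ U).Finite := by
  classical
  by_contra hcon
  push_neg at hcon
  have hnc : ∀ p : X, ∀ B : Set X, B ⊆ A → B.Infinite →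
      ∃ U, IsOpen U ∧ p ∈ U ∧ (B \ U).Infinite := by
    intro p B hBA hBinf
    obtain ⟨U, h1, h2, h3⟩ := hcon p B hBA hBinf
    exact ⟨U, h1, h2, h3⟩
  -- choice functions
  have hsplit : ∀ B : Set X, ∃ t : (X → ℝ) × Set X × Set X,
      B ⊆ A → B.Infinite → CNodeOK A ⟨B, t.1, t.2.1, t.2.2⟩ := by
    intro B
    by_cases hB : B ⊆ A ∧ B.Infinite
    · obtain ⟨g, C, D, h1, h2, h3, h4, h5, h6, h7, h8, h9⟩ :=
        exists_split hpc hAiso hAcount hnc hB.1 hB.2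
      exact ⟨(g, C, D), fun _ _ => ⟨hB.1, hB.2, h1, h2, h3, h4, h5, h6, h7, h8, h9⟩⟩
    · exact ⟨(fun _ => 0, ∅, ∅), fun h1 h2 => absurd ⟨h1, h2⟩ hB⟩
  choose sf hsf using hsplit
  have hprune : ∀ (E : Set X) (n : ℕ) (G : ℕ → X → ℝ), ∃ B' : Set X,
      E.Infinite → (∀ k, k < n → ∀ x, 0 ≤ G k x ∧ G k x ≤ 1) →
      (B' ⊆ E ∧ B'.Infinite ∧ ∀ k, k < n → ∃ c, ∀ a ∈ B', |G k a - c| ≤ (8:ℝ)⁻¹^n * 8⁻¹) := by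
    intro E n G
    by_cases h : E.Infinite ∧ (∀ k, k < n → ∀ x, 0 ≤ G k x ∧ G k x ≤ 1)
    · obtain ⟨B', h1, h2, h3⟩ := exists_prune h.1 n G h.2 (δ := (8:ℝ)⁻¹^n * 8⁻¹) (by positivity)
      exact ⟨B', fun _ _ => ⟨h1, h2, h3⟩⟩
    · exact ⟨∅, fun hE hG => absurd ⟨hE, hG⟩ h⟩
  choose pf hpf using hprune
  have spec := cnodes_spec A sf pf hAinf
    (fun B h1 h2 => hsf B h1 h2)
    (fun E n G h1 h2 => hpf E n G h1 h2)
  set N : ℕ → ConvNode X := cnodes A sf pf with hN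
  -- the function F
  set F : X → ℝ := fun x => ∑' k, (8:ℝ)⁻¹^k * (N k).g x with hF
  have hr0 : (0:ℝ) ≤ 8⁻¹ := by norm_num
  have hr1 : (8:ℝ)⁻¹ < 1 := by norm_num
  have hgeom : Summable (fun k => (8:ℝ)⁻¹^k) := summable_geometric_of_lt_one hr0 hr1
  have hsm : ∀ x, Summable (fun k => (8:ℝ)⁻¹^k * (N k).g x) := by
    intro x
    apply Summable.of_nonneg_of_le
      (fun k => mul_nonneg (by positivity) ((spec k).1.g0 x))
      (fun k => mul_le_of_le_one_right (by positivity) ((spec k).1.g1 x)) hgeom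
  have hFc : Continuous F := by
    apply continuous_tsum (fun k => continuous_const.mul (spec k).1.gcont) hgeom
    intro k x
    rw [Real.norm_eq_abs]
    show |(8:ℝ)⁻¹^k * (N k).g x| ≤ (8:ℝ)⁻¹^k
    rw [abs_mul, abs_pow, abs_of_nonneg hr0, abs_of_nonneg ((spec k).1.g0 x)]
    exact mul_le_of_le_one_right (by positivity) ((spec k).1.g1 x)
  have hFdiff : ∀ a b : X, F a - F b = ∑' k, (8:ℝ)⁻¹^k * ((N k).g a - (N k).g b) := by
    intro a b
    rw [hF]
    rw [← Summable.tsum_sub (hsm a) (hsm b)]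
    congr 1
    ext k
    ring
  -- oscillation and separation estimates
  have hdbound : ∀ (n : ℕ) (a b : X), a ∈ (N n).B → b ∈ (N n).B →
      (∀ k, |(N k).g a - (N k).g b| ≤ 2) ∧
      (∀ k, k < n → |(N k).g a - (N k).g b| ≤ 2 * ((8:ℝ)⁻¹^n * 8⁻¹)) := by
    intro n a b ha hb
    constructor
    · intro k
      have h1 := (spec k).1.g0 a
      have h2 := (spec k).1.g1 a
      have h3 := (spec k).1.g0 b
      have h4 := (spec k).1.g1 b
      rw [abs_le]
      constructor <;> linarith
    · intro k hk
      obtain ⟨c, hc⟩ := (spec n).2.1 k hk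
      have h1 := hc a ha
      have h2 := hc b hb
      rw [abs_le] at h1 h2 ⊢
      constructor <;> linarith
  have osc : ∀ (n : ℕ) (a b : X), a ∈ (N n).B → b ∈ (N n).B →
      |F a - F b| ≤ 2 * (8:ℝ)⁻¹^n := by
    intro n a b ha hb
    obtain ⟨hd2, hdn⟩ := hdbound n a b ha hb
    have hkey := key_est (fun k => (N k).g a - (N k).g b) n hd2 hdn
    rw [← hFdiff a b] at hkey
    have h1 : |(8:ℝ)⁻¹^n * ((N n).g a - (N n).g b)| ≤ (8:ℝ)⁻¹^n := by
      rw [abs_mul, abs_pow, abs_of_nonneg hr0]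
      calc (8:ℝ)⁻¹^n * |(N n).g a - (N n).g b| ≤ (8:ℝ)⁻¹^n * 1 := by
            apply mul_le_mul_of_nonneg_left _ (by positivity)
            have h1 := (spec n).1.g0 a
            have h2 := (spec n).1.g1 a
            have h3 := (spec n).1.g0 b
            have h4 := (spec n).1.g1 b
            rw [abs_le]; constructor <;> linarith
      _ = (8:ℝ)⁻¹^n := mul_one _
    have habs := abs_add_le ((F a - F b) - (8:ℝ)⁻¹^n * ((N n).g a - (N n).g b))
      ((8:ℝ)⁻¹^n * ((N n).g a - (N n).g b))
    simp only [sub_add_cancel] at habs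
    have hp : (0:ℝ) ≤ (8:ℝ)⁻¹^n := by positivity
    linarith
  have sep : ∀ (n : ℕ) (a b : X), a ∈ (N n).C → b ∈ (N n).D →
      (1/3) * (8:ℝ)⁻¹^n ≤ |F a - F b| := by
    intro n a b ha hb
    have haB := (spec n).1.CB ha
    have hbB := (spec n).1.DB hb
    obtain ⟨hd2, hdn⟩ := hdbound n a b haB hbB
    have hkey := key_est (fun k => (N k).g a - (N k).g b) n hd2 hdn
    rw [← hFdiff a b] at hkey
    have hgval : (8:ℝ)⁻¹^n * ((N n).g a - (N n).g b) = -((8:ℝ)⁻¹^n) := by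
      rw [(spec n).1.gC a ha, (spec n).1.gD b hb]
      ring
    rw [hgval, sub_neg_eq_add, abs_le] at hkey
    have hp : (0:ℝ) ≤ (8:ℝ)⁻¹^n := by positivity
    rw [le_abs]
    right
    linarith [hkey.2]
  -- chain lemmas
  have hCsub : ∀ (σ : ℕ → Bool) (j : ℕ), σ j = false →
      (N (bidx σ (j+1))).B ⊆ (N (bidx σ j)).C := by
    intro σ j h
    apply (spec (bidx σ (j+1))).2.2.1
    simp [bidx, h]
  have hDsub : ∀ (σ : ℕ → Bool) (j : ℕ), σ j = true →
      (N (bidx σ (j+1))).B ⊆ (N (bidx σ j)).D := by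
    intro σ j h
    apply (spec (bidx σ (j+1))).2.2.2
    simp [bidx, h]
  have hstep : ∀ (σ : ℕ → Bool) (j : ℕ), (N (bidx σ (j+1))).B ⊆ (N (bidx σ j)).B := by
    intro σ j
    cases hsj : σ j
    · exact (hCsub σ j hsj).trans (spec (bidx σ j)).1.CB
    · exact (hDsub σ j hsj).trans (spec (bidx σ j)).1.DB
  have hmono : ∀ (σ : ℕ → Bool) (i j : ℕ), i ≤ j →
      (N (bidx σ j)).B ⊆ (N (bidx σ i)).B := by
    intro σ i j hij
    induction j, hij using Nat.le_induction with
    | base => exact Subset.rfl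
    | succ j hij IHj => exact (hstep σ j).trans IHj
  -- points along branches
  have hptex : ∀ n : ℕ, ((N n).B).Nonempty := fun n => ((spec n).1.Binf).nonempty
  set pt : (ℕ → Bool) → ℕ → X := fun σ j => (hptex (bidx σ j)).some with hptdef
  have hptmem : ∀ σ j, pt σ j ∈ (N (bidx σ j)).B := fun σ j => (hptex (bidx σ j)).some_mem
  -- Cauchy sequences and limits
  have hcau : ∀ σ : ℕ → Bool, CauchySeq (fun j => F (pt σ j)) := by
    intro σ
    apply cauchySeq_of_le_geometric (8:ℝ)⁻¹ 2 hr1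
    intro j
    rw [Real.dist_eq]
    have h1 : pt σ j ∈ (N (bidx σ j)).B := hptmem σ j
    have h2 : pt σ (j+1) ∈ (N (bidx σ j)).B := hstep σ j (hptmem σ (j+1))
    calc |F (pt σ j) - F (pt σ (j+1))| ≤ 2 * (8:ℝ)⁻¹^(bidx σ j) := osc _ _ _ h1 h2
    _ ≤ 2 * (8:ℝ)⁻¹^j := by
        apply mul_le_mul_of_nonneg_left _ (by norm_num)
        exact pow_le_pow_of_le_one hr0 hr1.le (bidx_ge σ j)
  have hvex : ∀ σ : ℕ → Bool, ∃ v : ℝ, Tendsto (fun j => F (pt σ j)) atTop (𝓝 v) :=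
    fun σ => cauchySeq_tendsto_of_complete (hcau σ)
  choose v hv using hvex
  -- the range of F is closed
  have hclosed : closure (Set.range F) ⊆ Set.range F := by
    intro y hy
    by_contra hyn
    have hne : ∀ x, F x ≠ y := fun x h => hyn ⟨x, h⟩
    have habs : ∀ x, (0:ℝ) < |F x - y| := fun x => abs_pos.2 (sub_ne_zero.2 (hne x))
    have hcont : Continuous fun x => |F x - y|⁻¹ :=
      ((hFc.sub continuous_const).abs).inv₀ (fun x => (habs x).ne')
    obtain ⟨M, hM⟩ := hpc.2.2 _ hcont
    obtain ⟨x₀, -⟩ := hAinf.nonempty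
    have hM0 : 0 < M := lt_of_lt_of_le (by
      calc (0:ℝ) < |F x₀ - y|⁻¹ := inv_pos.2 (habs x₀)
      _ ≤ |(|F x₀ - y|)⁻¹| := le_abs_self _) (hM x₀)
    obtain ⟨z, hz, hdist⟩ := Metric.mem_closure_iff.1 hy M⁻¹ (by positivity)
    obtain ⟨x, rfl⟩ := hz
    have hlt : |F x - y| < M⁻¹ := by
      rw [Real.dist_eq, abs_sub_comm] at hdist
      exact hdist
    have hinv : |F x - y|⁻¹ ≤ M := le_of_abs_le (hM x)
    have e1 : |F x - y| * |F x - y|⁻¹ = 1 := mul_inv_cancel₀ (habs x).ne'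
    have e2 : M⁻¹ * M = 1 := inv_mul_cancel₀ hM0.ne'
    nlinarith [mul_le_mul_of_nonneg_left hinv (habs x).le, mul_lt_mul_of_pos_right hlt hM0]
  have hvr : ∀ σ, v σ ∈ Set.range F := by
    intro σ
    apply hclosed
    exact mem_closure_of_tendsto (hv σ) (Eventually.of_forall fun j => ⟨pt σ j, rfl⟩)
  -- separation of limits
  have hsep2 : ∀ (α β : ℕ → Bool) (j₀ : ℕ), α j₀ = false → β j₀ = true →
      bidx α j₀ = bidx β j₀ → (1/3) * (8:ℝ)⁻¹^(bidx α j₀) ≤ |v α - v β| := by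
    intro α β j₀ hα hβ hidx
    apply ge_of_tendsto (((hv α).sub (hv β)).abs)
    filter_upwards [eventually_ge_atTop (j₀+1)] with j hj
    have ha : pt α j ∈ (N (bidx α j₀)).C :=
      hCsub α j₀ hα (hmono α (j₀+1) j hj (hptmem α j))
    have hb : pt β j ∈ (N (bidx β j₀)).D :=
      hDsub β j₀ hβ (hmono β (j₀+1) j hj (hptmem β j))
    rw [← hidx] at hb
    exact sep (bidx α j₀) _ _ ha hb
  -- injectivity
  have hinj : Function.Injective v := by
    intro σ τ h
    by_contra hne
    have hex : ∃ j, σ j ≠ τ j := Function.ne_iff.1 hne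
    set j₀ := Nat.find hex with hj₀def
    have hj₀ : σ j₀ ≠ τ j₀ := Nat.find_spec hex
    have hpref : ∀ i, i < j₀ → σ i = τ i := by
      intro i hi
      have := Nat.find_min hex hi
      simpa using this
    have hidx : bidx σ j₀ = bidx τ j₀ := bidx_congr σ τ j₀ hpref
    have h0 : |v σ - v τ| = 0 := by rw [h, sub_self, abs_zero]
    have hp : (0:ℝ) < (1/3) * (8:ℝ)⁻¹^(bidx σ j₀) := by positivity
    cases hσ : σ j₀ <;> cases hτ : τ j₀
    · exact hj₀ (hσ.trans hτ.symm)
    · have := hsep2 σ τ j₀ hσ hτ hidx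
      rw [h0] at this
      linarith
    · have := hsep2 τ σ j₀ hτ hσ hidx.symm
      rw [← hidx, abs_sub_comm, h0] at this
      linarith
    · exact hj₀ (hσ.trans hτ.symm)
  -- Cantor contradiction
  have hcnt : (Set.range F).Countable := hfc F hFc
  haveI := hcnt.to_subtype
  have hinj2 : Function.Injective (fun σ : ℕ → Bool => (⟨v σ, hvr σ⟩ : Set.range F)) :=
    fun σ τ h => hinj (congrArg Subtype.val h)
  haveI hCbool : Countable (ℕ → Bool) := hinj2.countable
  have hinj3 : Function.Injective (fun (s : Set ℕ) (n : ℕ) => if n ∈ s then true else false) := by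
    intro s t h
    ext n
    constructor
    · intro hn
      by_contra hm
      have h2 := congrFun h n
      simp only [if_pos hn, if_neg hm] at h2
      exact Bool.noConfusion h2
    · intro hn
      by_contra hm
      have h2 := congrFun h n
      simp only [if_neg hm, if_pos hn] at h2
      exact Bool.noConfusion h2
  haveI : Countable (Set ℕ) := hinj3.countable
  obtain ⟨ι, hι⟩ := exists_injective_nat (Set ℕ)
  exact Function.cantor_injective ι hι
end

section
/- Let X and Y be pseudocompact and functionally countable topological spaces. Then the set of isolated points of the product X × Y equals the product of the set of isolated points of X with the set of isolated points of Y, and for every countably infinite subset A of this set of isolated points, A has a limit point in X × Y (i.e., the closure of A in X × Y is strictly larger than A). -/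
open Set Topology Filter unitInterval

lemma iso_prod_iff {X Y : Type*} [TopologicalSpace X] [TopologicalSpace Y] {x : X} {y : Y} :
    IsOpen ({(x, y)} : Set (X × Y)) ↔ IsOpen ({x} : Set X) ∧ IsOpen ({y} : Set Y) := by
  constructor
  · intro h
    obtain ⟨u, v, hu, hv, hxu, hyv, huv⟩ := isOpen_prod_iff.mp h x y rfl
    constructor
    · have he : u = {x} := by
        apply Subset.antisymm
        · intro a ha
          have h2 : (a, y) ∈ ({(x, y)} : Set (X × Y)) := huv ⟨ha, hyv⟩
          have := mem_singleton_iff.mp h2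
          simpa using congrArg Prod.fst this
        · simpa using hxu
      exact he ▸ hu
    · have he : v = {y} := by
        apply Subset.antisymm
        · intro b hb
          have h2 : (x, b) ∈ ({(x, y)} : Set (X × Y)) := huv ⟨hxu, hb⟩
          have := mem_singleton_iff.mp h2
          simpa using congrArg Prod.snd this
        · simpa using hyv
      exact he ▸ hv
  · rintro ⟨h1, h2⟩
    have he : ({(x, y)} : Set (X × Y)) = {x} ×ˢ {y} := by
      ext ⟨a, b⟩; simp [Prod.ext_iff]
    rw [he]
    exact h1.prod h2


lemma fin_of_iso {Z : Type*} [TopologicalSpace Z] {C : Set Z} (hC : IsCompact C)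
    (h : ∀ z ∈ C, IsOpen ({z} : Set Z)) : C.Finite := by
  obtain ⟨J, hIC, hIfin, hcov⟩ := hC.elim_finite_subcover_image (c := fun z => ({z} : Set Z)) h
    (by intro z hz; exact mem_biUnion hz rfl)
  refine hIfin.subset ?_
  intro z hz
  obtain ⟨i, hi, hzi⟩ := mem_iUnion₂.mp (hcov hz)
  rwa [mem_singleton_iff.mp hzi]

lemma limit_point_of_isolated {X : Type*} [TopologicalSpace X] (hpc : Pseudocompact X)
    {B : Set X} (hiso : ∀ x ∈ B, IsOpen ({x} : Set X)) (hcnt : B.Countable)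
    (hinf : B.Infinite) : (closure B \ B).Nonempty := by
  by_contra hne
  rw [Set.not_nonempty_iff_eq_empty, diff_eq_empty] at hne
  have hBcl : IsClosed B := isClosed_of_closure_subset hne
  haveI := hcnt.to_subtype
  haveI := hinf.to_subtype
  obtain ⟨d⟩ := nonempty_denumerable_iff.mpr ⟨‹_›, ‹_›⟩
  haveI := d
  let eqv : ℕ ≃ ↥B := (Denumerable.eqv ↥B).symm
  classical
  let g : X → ℝ := fun x => if h : x ∈ B then ((eqv.symm ⟨x, h⟩ : ℕ) : ℝ) else 0
  have hgc : Continuous g := by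
    rw [continuous_iff_continuousAt]
    intro x
    by_cases hx : x ∈ B
    · have h1 : ({x} : Set X) ∈ 𝓝 x := (hiso x hx).mem_nhds rfl
      exact Filter.EventuallyEq.continuousAt
        (eventually_of_mem h1 (fun y hy => by rw [mem_singleton_iff.mp hy]))
    · refine Filter.EventuallyEq.continuousAt (y := 0) ?_
      have h1 : Bᶜ ∈ 𝓝 x := hBcl.isOpen_compl.mem_nhds hx
      exact eventually_of_mem h1 (fun y hy => dif_neg hy)
  obtain ⟨M, hM⟩ := hpc.2.2 g hgc
  set n : ℕ := ⌈M⌉₊ + 1 with hn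
  set x : ↥B := eqv n with hx
  have hxB : (x : X) ∈ B := x.2
  have hgx : g (x : X) = n := by
    simp only [g, dif_pos hxB]
    norm_cast
    have h2 : (⟨(x : X), hxB⟩ : ↥B) = x := Subtype.ext rfl
    rw [h2, hx, Equiv.symm_apply_apply]
  have h4 := hM (x : X)
  rw [hgx] at h4
  have h5 : (n : ℝ) ≤ M := (le_abs_self _).trans h4
  have h6 : M ≤ (⌈M⌉₊ : ℝ) := Nat.le_ceil M
  rw [hn] at h5
  push_cast at h5
  linarith


lemma cl_image_subset {Z : Type*} [TopologicalSpace Z] [T2Space Z]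
    (w : ℕ → Z) (S : Set ℕ) (p : Z)
    (hesc : ∀ U ∈ 𝓝 p, {n | n ∈ S ∧ w n ∉ U}.Finite) :
    closure (w '' S) ⊆ w '' S ∪ {p} := by
  intro v hv
  by_contra hvn
  rw [mem_union, not_or] at hvn
  obtain ⟨hv1, hv2⟩ := hvn
  have hvp : v ≠ p := fun h => hv2 (by rw [h]; exact rfl)
  obtain ⟨Ov, Op, hOv, hOp, hvOv, hpOp, hd⟩ := t2_separation hvp
  have hG := hesc Op (hOp.mem_nhds hpOp)
  have himg : w '' S ⊆ Op ∪ w '' {n | n ∈ S ∧ w n ∉ Op} := by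
    rintro _ ⟨n, hn, rfl⟩
    by_cases h : w n ∈ Op
    · exact Or.inl h
    · exact Or.inr ⟨n, ⟨hn, h⟩, rfl⟩
  have hsub : closure (w '' S) ⊆ closure Op ∪ w '' {n | n ∈ S ∧ w n ∉ Op} := by
    calc closure (w '' S) ⊆ closure (Op ∪ w '' {n | n ∈ S ∧ w n ∉ Op}) := closure_mono himg
    _ = closure Op ∪ closure (w '' {n | n ∈ S ∧ w n ∉ Op}) := closure_union
    _ = closure Op ∪ w '' {n | n ∈ S ∧ w n ∉ Op} := by rw [(hG.image w).isClosed.closure_eq]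
  rcases hsub hv with h | h
  · have : (Ov ∩ Op).Nonempty := by
      rw [mem_closure_iff] at h
      exact h Ov hOv hvOv
    exact (hd.inter_eq ▸ this).ne_empty rfl
  · exact hv1 (image_mono (fun n hn => hn.1) h)

lemma scattered_of_fc {Z : Type*} [TopologicalSpace Z] [CompactSpace Z] [T2Space Z]
    (hfc : ∀ g : Z → ℝ, Continuous g → (Set.range g).Countable) :
    ∀ C : Set Z, IsClosed C → C.Nonempty → ∃ z ∈ C, ∃ W : Set Z, IsOpen W ∧ W ∩ C = {z} := by
  intro C hCcl hCne
  by_contra hcon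
  push_neg at hcon
  classical
  -- from non-scatteredness: every open set meeting C meets it in two points
  have hsplitpt : ∀ z ∈ C, ∀ W : Set Z, IsOpen W → z ∈ W → ∃ z', z' ∈ W ∩ C ∧ z' ≠ z := by
    intro z hz W hW hzW
    by_contra h
    push_neg at h
    refine hcon z hz W hW (Subset.antisymm (fun a ha => h a ha) ?_)
    intro a ha
    rw [mem_singleton_iff.mp ha]
    exact ⟨hzW, hz⟩
  -- cells
  let Cell := {V : Set Z // IsOpen V ∧ (V ∩ C).Nonempty}
  have splitEx : ∀ c : Cell, ∃ d : Cell × Cell,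
      (closure d.1.1 ⊆ c.1 ∧ closure d.2.1 ⊆ c.1) ∧
        Disjoint (closure d.1.1) (closure d.2.1) := by
    rintro ⟨V, hV, a, haV, haC⟩
    obtain ⟨b, ⟨hbV, hbC⟩, hba⟩ := hsplitpt a haC V hV haV
    obtain ⟨Oa, Ob, hOa, hOb, haOa, hbOb, hdab⟩ := t2_separation (Ne.symm hba)
    have sh : ∀ (u : Z) (O : Set Z), IsOpen O → u ∈ O → u ∈ C →
        ∃ V' : Set Z, IsOpen V' ∧ u ∈ V' ∧ closure V' ⊆ O ∧ (V' ∩ C).Nonempty := by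
      intro u O hO huO huC
      obtain ⟨t, htmem, htcl, htsub⟩ := exists_mem_nhds_isClosed_subset (hO.mem_nhds huO)
      exact ⟨interior t, isOpen_interior, mem_interior_iff_mem_nhds.mpr htmem,
        (closure_minimal interior_subset htcl).trans htsub,
        ⟨u, mem_interior_iff_mem_nhds.mpr htmem, huC⟩⟩
    obtain ⟨Va, hVa, haVa, hclVa, hVaC⟩ := sh a (V ∩ Oa) (hV.inter hOa) ⟨haV, haOa⟩ haC
    obtain ⟨Vb, hVb, hbVb, hclVb, hVbC⟩ := sh b (V ∩ Ob) (hV.inter hOb) ⟨hbV, hbOb⟩ hbC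
    exact ⟨(⟨Va, hVa, hVaC⟩, ⟨Vb, hVb, hVbC⟩),
      ⟨hclVa.trans inter_subset_left, hclVb.trans inter_subset_left⟩,
      hdab.mono (hclVa.trans inter_subset_right) (hclVb.trans inter_subset_right)⟩
  let split : Cell → Cell × Cell := fun c => (splitEx c).choose
  have hsplit1 : ∀ c : Cell, closure ((split c).1).1 ⊆ c.1 :=
    fun c => ((splitEx c).choose_spec.1).1
  have hsplit2 : ∀ c : Cell, closure ((split c).2).1 ⊆ c.1 :=
    fun c => ((splitEx c).choose_spec.1).2
  have hsplitd : ∀ c : Cell, Disjoint (closure ((split c).1).1) (closure ((split c).2).1) :=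
    fun c => (splitEx c).choose_spec.2
  let base : Cell := ⟨univ, isOpen_univ, by simpa using hCne⟩
  let cell : List Bool → Cell :=
    fun l => List.rec base (fun b _ ih => cond b (split ih).2 (split ih).1) l
  have cell_cons : ∀ (b : Bool) (s : List Bool),
      cell (b :: s) = cond b (split (cell s)).2 (split (cell s)).1 := fun _ _ => rfl
  have hsub : ∀ (b : Bool) (s : List Bool), closure (cell (b :: s)).1 ⊆ (cell s).1 := by
    intro b s
    cases b
    · rw [cell_cons]; exact hsplit1 (cell s)
    · rw [cell_cons]; exact hsplit2 (cell s)
  have hdisj : ∀ s t : List Bool, s.length = t.length → s ≠ t →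
      Disjoint (closure (cell s).1) (closure (cell t).1) := by
    intro s
    induction s with
    | nil =>
      intro t hl hne
      cases t with
      | nil => exact absurd rfl hne
      | cons b t' => simp at hl
    | cons a s ih =>
      intro t hl hne
      cases t with
      | nil => simp at hl
      | cons b t' =>
        by_cases hst : s = t'
        · subst hst
          have hab : a ≠ b := fun h => hne (by rw [h])
          cases a
          · cases b
            · exact absurd rfl hab
            · rw [cell_cons, cell_cons]; exact hsplitd (cell s)
          · cases b
            · rw [cell_cons, cell_cons]; exact (hsplitd (cell s)).symm
            · exact absurd rfl hab
        · have hIH := ih t' (Nat.succ_injective hl) hst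
          exact hIH.mono ((hsub a s).trans subset_closure) ((hsub b t').trans subset_closure)
  -- finiteness of levels
  have hlevfin : ∀ n : ℕ, {l : List Bool | l.length = n}.Finite := by
    intro n
    induction n with
    | zero =>
      have : {l : List Bool | l.length = 0} = {[]} := by
        ext l; cases l <;> simp
      rw [this]; exact finite_singleton _
    | succ n ih =>
      have : {l : List Bool | l.length = n + 1} =
          (fun l => (false : Bool) :: l) '' {l | l.length = n} ∪
            (fun l => (true : Bool) :: l) '' {l | l.length = n} := by
        ext l
        constructor
        · intro hl
          cases l with
          | nil => simp at hl
          | cons b t =>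
            cases b
            · exact Or.inl ⟨t, by simpa using hl, rfl⟩
            · exact Or.inr ⟨t, by simpa using hl, rfl⟩
        · rintro (⟨t, ht, rfl⟩ | ⟨t, ht, rfl⟩) <;> simpa using ht
      rw [this]
      exact (ih.image _).union (ih.image _)
  -- the level separating sets
  let As : ℕ → Set Z := fun n => ⋃ s ∈ {l : List Bool | l.length = n}, closure (cell (false :: s)).1
  let Bs : ℕ → Set Z := fun n => ⋃ s ∈ {l : List Bool | l.length = n}, closure (cell (true :: s)).1
  have hAcl : ∀ n, IsClosed (As n) :=
    fun n => (hlevfin n).isClosed_biUnion (fun s _ => isClosed_closure)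
  have hBcl : ∀ n, IsClosed (Bs n) :=
    fun n => (hlevfin n).isClosed_biUnion (fun s _ => isClosed_closure)
  have hABd : ∀ n, Disjoint (As n) (Bs n) := by
    intro n
    rw [Set.disjoint_left]
    intro z hzA hzB
    obtain ⟨s, hs, hzs⟩ := mem_iUnion₂.mp hzA
    obtain ⟨t, ht, hzt⟩ := mem_iUnion₂.mp hzB
    have hne : (false :: s : List Bool) ≠ (true :: t) := by simp
    have hlen : (false :: s : List Bool).length = (true :: t).length := by
      simp [hs, ht]
      rw [hs, ht]
    exact (hdisj _ _ hlen hne).le_bot ⟨hzs, hzt⟩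
  -- Urysohn functions
  have hUry : ∀ n, ∃ h : Z → ℝ, Continuous h ∧ EqOn h 0 (As n) ∧ EqOn h 1 (Bs n) ∧
      ∀ z, h z ∈ Icc (0:ℝ) 1 := by
    intro n
    obtain ⟨f, h0, h1, hmem⟩ := exists_continuous_zero_one_of_isClosed (hAcl n) (hBcl n) (hABd n)
    exact ⟨f, f.continuous, h0, h1, hmem⟩
  choose h hhc hh0 hh1 hhm using hUry
  let f : Z → ℝ := fun z => ∑' n, (1/3 : ℝ)^n * h n z
  have hfcont : Continuous f := by
    apply continuous_tsum (fun n => continuous_const.mul (hhc n))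
      (summable_geometric_of_lt_one (by norm_num) (by norm_num : (1/3:ℝ) < 1))
    intro n z
    rw [Real.norm_eq_abs, Pi.mul_apply, abs_mul, abs_of_nonneg (by positivity : (0:ℝ) ≤ (1/3)^n)]
    have hm := hhm n z
    have : |h n z| ≤ 1 := abs_le.mpr ⟨by linarith [hm.1], hm.2⟩
    nlinarith [pow_nonneg (by norm_num : (0:ℝ) ≤ 1/3) n]
  -- branches
  let L : (ℕ → Bool) → ℕ → List Bool := fun sq n => Nat.rec [] (fun m ih => sq m :: ih) n
  have hLsucc : ∀ sq n, L sq (n+1) = sq n :: L sq n := fun _ _ => rfl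
  have hLlen : ∀ sq n, (L sq n).length = n := by
    intro sq n
    induction n with
    | zero => rfl
    | succ n ih => rw [hLsucc]; simp [ih]
  have hbranch : ∀ sq : ℕ → Bool, ∃ z : Z, ∀ n, z ∈ closure (cell (L sq n)).1 := by
    intro sq
    have hne : (⋂ n, closure (cell (L sq n)).1).Nonempty := by
      apply IsCompact.nonempty_iInter_of_sequence_nonempty_isCompact_isClosed
      · intro n
        rw [hLsucc]
        exact (hsub (sq n) (L sq n)).trans subset_closure
      · intro n
        obtain ⟨a, ha, _⟩ := (cell (L sq n)).2.2
        exact ⟨a, subset_closure ha⟩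
      · exact isClosed_closure.isCompact
      · exact fun n => isClosed_closure
    obtain ⟨z, hz⟩ := hne
    exact ⟨z, fun n => mem_iInter.mp hz n⟩
  choose zb hzb using hbranch
  have hval : ∀ sq n, h n (zb sq) = cond (sq n) 1 0 := by
    intro sq n
    have hz' := hzb sq (n+1)
    rw [hLsucc] at hz'
    cases hsq : sq n
    · rw [hsq] at hz'
      have : zb sq ∈ As n := mem_biUnion (hLlen sq n) hz'
      rw [hh0 n this]
      rfl
    · rw [hsq] at hz'
      have : zb sq ∈ Bs n := mem_biUnion (hLlen sq n) hz'
      rw [hh1 n this]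
      rfl
  have hfval : ∀ sq, f (zb sq) = Cardinal.cantorFunction (1/3) sq := by
    intro sq
    unfold Cardinal.cantorFunction
    apply tsum_congr
    intro n
    rw [hval sq n]
    cases hsq : sq n <;> simp [Cardinal.cantorFunctionAux, hsq]
  have hinj : Function.Injective (fun sq : ℕ → Bool => f (zb sq)) := by
    intro sq τ hst
    apply Cardinal.cantorFunction_injective (by norm_num) (by norm_num : (1/3:ℝ) < 1/2)
    rw [← hfval sq, ← hfval τ]
    exact hst
  -- contradiction with countable range
  have hcnt := hfc f hfcont
  haveI hcnt2 : Countable ↥(Set.range f) := hcnt.to_subtype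
  have hinj2 : Function.Injective
      (fun sq : ℕ → Bool => (⟨f (zb sq), mem_range_self _⟩ : ↥(Set.range f))) := by
    intro sq τ hst
    exact hinj (congrArg Subtype.val hst)
  haveI : Countable (ℕ → Bool) := hinj2.countable
  obtain ⟨g, hg⟩ := exists_surjective_nat (ℕ → Bool)
  obtain ⟨m, hm⟩ := hg (fun n => !(g n n))
  have := congrFun hm m
  simp at this

lemma exists_conv_sub {Z : Type*} [TopologicalSpace Z] [CompactSpace Z] [T2Space Z]
    (hsc : ∀ C : Set Z, IsClosed C → C.Nonempty → ∃ z ∈ C, ∃ W : Set Z, IsOpen W ∧ W ∩ C = {z})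
    (w : ℕ → Z) (hiso : ∀ n, IsOpen ({w n} : Set Z)) (S : Set ℕ) (hS : S.Infinite)
    (hinj : Set.InjOn w S) :
    ∃ S' : Set ℕ, S' ⊆ S ∧ S'.Infinite ∧ ∃ p : Z, ¬ IsOpen ({p} : Set Z) ∧
      ∀ U ∈ 𝓝 p, {n | n ∈ S' ∧ w n ∉ U}.Finite := by
  have hIso : IsOpen {z : Z | IsOpen ({z} : Set Z)} := by
    rw [isOpen_iff_mem_nhds]
    intro z hz
    exact Filter.mem_of_superset ((hz : IsOpen ({z} : Set Z)).mem_nhds rfl)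
      (by intro y hy; rw [mem_singleton_iff.mp hy]; exact hz)
  have hwS : (w '' S).Infinite := by
    intro hfin
    exact hS (Set.Finite.of_finite_image hfin hinj)
  set C : Set Z := closure (w '' S) \ {z : Z | IsOpen ({z} : Set Z)} with hC
  have hCcl : IsClosed C := isClosed_closure.sdiff hIso
  have hCne : C.Nonempty := by
    by_contra hem
    rw [Set.not_nonempty_iff_eq_empty, hC, diff_eq_empty] at hem
    have hfin : (closure (w '' S)).Finite :=
      fin_of_iso isClosed_closure.isCompact (fun z hz => hem hz)
    exact hwS (hfin.subset subset_closure)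
  obtain ⟨p, hpC, W, hWo, hWC⟩ := hsc C hCcl hCne
  have hpW : p ∈ W ∧ p ∈ C := by
    have : p ∈ W ∩ C := by rw [hWC]; rfl
    exact this
  obtain ⟨t, htn, htc, hts⟩ := exists_mem_nhds_isClosed_subset (hWo.mem_nhds hpW.1)
  set V : Set Z := interior t with hV
  have hpV : p ∈ V := mem_interior_iff_mem_nhds.mpr htn
  have hpni : ¬ IsOpen ({p} : Set Z) := hpC.2
  refine ⟨{n | n ∈ S ∧ w n ∈ V}, fun n hn => hn.1, ?_, p, hpni, ?_⟩
  · -- infinite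
    intro hfin
    have hGfin : (w '' {n | n ∈ S ∧ w n ∈ V}).Finite := hfin.image w
    have hpG : p ∉ w '' {n | n ∈ S ∧ w n ∈ V} := by
      rintro ⟨n, hn, rfl⟩
      exact hpni (hiso n)
    have hV' : IsOpen (V \ w '' {n | n ∈ S ∧ w n ∈ V}) :=
      isOpen_interior.sdiff hGfin.isClosed
    have hpcl : p ∈ closure (w '' S) := hpC.1
    rw [mem_closure_iff] at hpcl
    obtain ⟨v, hv1, n, hnS, rfl⟩ := hpcl _ hV' ⟨hpV, hpG⟩
    exact hv1.2 ⟨n, ⟨hnS, hv1.1⟩, rfl⟩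
  · intro U hU
    by_contra hTinf
    have hTinf : {n | (n ∈ S ∧ w n ∈ V) ∧ w n ∉ U}.Infinite := by
      intro hfin
      exact hTinf (hfin.subset (fun n hn => ⟨hn.1, hn.2⟩))
    set T : Set ℕ := {n | (n ∈ S ∧ w n ∈ V) ∧ w n ∉ U} with hT
    set F : Set Z := w '' T with hF
    have hFS : F ⊆ w '' S := image_mono (fun n hn => hn.1.1)
    have hFinf : F.Infinite := by
      intro hfin
      exact hTinf (Set.Finite.of_finite_image hfin (hinj.mono (fun n hn => hn.1.1)))
    have hFne : (closure F \ F).Nonempty := by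
      by_contra hem
      rw [Set.not_nonempty_iff_eq_empty, diff_eq_empty] at hem
      have hFcl : IsClosed F := isClosed_of_closure_subset hem
      refine hFinf (fin_of_iso hFcl.isCompact ?_)
      rintro _ ⟨n, hn, rfl⟩
      exact hiso n
    obtain ⟨u, hucl, huF⟩ := hFne
    have huiso : ¬ IsOpen ({u} : Set Z) := by
      intro hop
      rw [mem_closure_iff] at hucl
      obtain ⟨v, hv1, hv2⟩ := hucl _ hop rfl
      rw [mem_singleton_iff.mp hv1] at hv2
      exact huF hv2
    have huC : u ∈ C := ⟨closure_mono hFS hucl, huiso⟩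
    have huW : u ∈ W := by
      have h1 : closure F ⊆ closure V := closure_mono (by rintro _ ⟨n, hn, rfl⟩; exact hn.1.2)
      have h2 : closure V ⊆ t := closure_minimal interior_subset htc
      exact hts (h2 (h1 hucl))
    have hup : u = p := by
      have : u ∈ W ∩ C := ⟨huW, huC⟩
      rwa [hWC, mem_singleton_iff] at this
    obtain ⟨U', hU'sub, hU'o, hpU'⟩ := mem_nhds_iff.mp hU
    rw [hup, mem_closure_iff] at hucl
    obtain ⟨v, hv1, n, hnT, rfl⟩ := hucl U' hU'o hpU'
    exact hnT.2 (hU'sub hv1)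

section Cpt

variable (X : Type*) [TopologicalSpace X]

noncomputable def cptK : Set (C(X, unitInterval) → unitInterval) :=
  closure (Set.range fun (x : X) (f : C(X, unitInterval)) => f x)

noncomputable def cptE (x : X) : ↥(cptK X) :=
  ⟨fun f => f x, subset_closure ⟨x, rfl⟩⟩

instance : CompactSpace ↥(cptK X) :=
  isCompact_iff_compactSpace.mp isClosed_closure.isCompact

lemma cptE_cont : Continuous (cptE X) :=
  Continuous.subtype_mk (continuous_pi fun f => f.continuous) _

lemma cptE_dense : DenseRange (cptE X) := by
  intro k
  rw [mem_closure_iff]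
  intro O hO hkO
  obtain ⟨O', hO', hOeq⟩ := isOpen_induced_iff.mp hO
  have hk' : (k : C(X, unitInterval) → unitInterval) ∈ O' := by
    rw [← hOeq] at hkO; exact hkO
  have hkcl : (k : C(X, unitInterval) → unitInterval) ∈
      closure (Set.range fun (x : X) (f : C(X, unitInterval)) => f x) := k.2
  rw [mem_closure_iff] at hkcl
  obtain ⟨v, hvO', x, rfl⟩ := hkcl O' hO' hk'
  exact ⟨cptE X x, by rw [← hOeq]; exact hvO', mem_range_self x⟩

lemma cptE_nhds (hcr : CompletelyRegularSpace X) {x : X} {U : Set X}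
    (hU : IsOpen U) (hxU : x ∈ U) :
    ∃ W : Set ↥(cptK X), IsOpen W ∧ cptE X x ∈ W ∧ ∀ y, cptE X y ∈ W → y ∈ U := by
  obtain ⟨f, hfc, hfx, hfK⟩ := hcr.completely_regular x Uᶜ hU.isClosed_compl (by simpa using hxU)
  refine ⟨{k | (k : C(X, unitInterval) → unitInterval) ⟨f, hfc⟩ ≠ 1}, ?_, ?_, ?_⟩
  · have hco : Continuous fun k : ↥(cptK X) =>
        (k : C(X, unitInterval) → unitInterval) ⟨f, hfc⟩ :=
      (continuous_apply (⟨f, hfc⟩ : C(X, unitInterval))).comp continuous_subtype_val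
    exact isOpen_compl_singleton.preimage hco
  · show f x ≠ 1
    rw [hfx]
    intro h
    have := congrArg Subtype.val h
    norm_num at this
  · intro y hy
    by_contra hyU
    exact hy (hfK (by simpa using hyU))

lemma cptE_inj (ht2 : T2Space X) (hcr : CompletelyRegularSpace X) :
    Function.Injective (cptE X) := by
  intro a b hab
  by_contra hne
  haveI := ht2
  obtain ⟨f, hfc, hfa, hfb⟩ := hcr.completely_regular a {b} isClosed_singleton (by simpa using hne)
  have h1 := congrArg (fun k : ↥(cptK X) => (k : C(X, unitInterval) → unitInterval) ⟨f, hfc⟩) hab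
  have h2 : f a = f b := h1
  rw [hfa, hfb rfl] at h2
  have := congrArg Subtype.val h2
  norm_num at this

lemma cptE_iso (hcr : CompletelyRegularSpace X) {x : X} (hx : IsOpen ({x} : Set X)) :
    IsOpen ({cptE X x} : Set ↥(cptK X)) := by
  obtain ⟨W, hWo, hWx, hWsub⟩ := cptE_nhds X hcr hx rfl
  have h1 : W ⊆ closure (W ∩ Set.range (cptE X)) :=
    (cptE_dense X).open_subset_closure_inter hWo
  have h2 : W ∩ Set.range (cptE X) ⊆ {cptE X x} := by
    rintro k ⟨hkW, y, rfl⟩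
    have : y = x := hWsub y hkW
    rw [this]
    rfl
  have h3 : W ⊆ {cptE X x} := fun k hk => by
    have h4 := closure_mono h2 (h1 hk)
    rwa [closure_singleton] at h4
  have h5 : W = {cptE X x} := h3.antisymm (by simpa using hWx)
  rw [← h5]; exact hWo

lemma cptK_fc (hpc : Pseudocompact X) (hfc : FunctionallyCountable X) :
    ∀ g : ↥(cptK X) → ℝ, Continuous g → (Set.range g).Countable := by
  intro g hg
  have hcomp : Continuous (g ∘ cptE X) := hg.comp (cptE_cont X)
  have key : closure (Set.range (g ∘ cptE X)) ⊆ Set.range (g ∘ cptE X) := by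
    intro r hr
    by_contra hrn
    have hne0 : ∀ x : X, g (cptE X x) - r ≠ 0 := by
      intro x h
      exact hrn ⟨x, by rw [Function.comp_apply]; linarith [sub_eq_zero.mp h]⟩
    obtain ⟨M, hM⟩ := hpc.2.2 (fun x => (g (cptE X x) - r)⁻¹)
      (((hg.comp (cptE_cont X)).sub continuous_const).inv₀ hne0)
    rw [Metric.mem_closure_iff] at hr
    obtain ⟨a, ⟨x, rfl⟩, hlt⟩ := hr ((|M| + 1)⁻¹) (by positivity)
    rw [Real.dist_eq, abs_sub_comm] at hlt
    have h2 := hM x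
    rw [abs_inv] at h2
    have hpos : 0 < |g (cptE X x) - r| := abs_pos.mpr (hne0 x)
    have h3 : (|M| + 1) < |g (cptE X x) - r|⁻¹ := by
      rw [← inv_inv (|M| + 1)]
      exact inv_strictAnti₀ hpos (by exact hlt)
    have h4 : |g (cptE X x) - r|⁻¹ ≤ |M| := h2.trans (le_abs_self M)
    linarith
  have h2 : Set.range g ⊆ closure (Set.range (g ∘ cptE X)) := by
    rintro _ ⟨k, rfl⟩
    have hk := cptE_dense X k
    have h3 : g k ∈ g '' closure (Set.range (cptE X)) := ⟨k, hk, rfl⟩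
    have h4 := image_closure_subset_closure_image hg h3
    rwa [← Set.range_comp] at h4
  exact (hfc _ hcomp).mono (h2.trans key)

end Cpt

/-- If `X` and `Y` are pseudocompact and functionally
countable, then the isolated points of `X × Y` are exactly the pairs of
isolated points, and every countably infinite set of isolated points of
`X × Y` has a limit point in `X × Y` (its closure is strictly larger). -/
theorem isolated_points_prod_and_limit_points
    {X Y : Type*} [TopologicalSpace X] [TopologicalSpace Y]
    (hXpc : Pseudocompact X) (hXfc : FunctionallyCountable X)
    (hYpc : Pseudocompact Y) (hYfc : FunctionallyCountable Y) :
    {z : X × Y | IsOpen ({z} : Set (X × Y))} =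
      {x : X | IsOpen ({x} : Set X)} ×ˢ {y : Y | IsOpen ({y} : Set Y)} ∧
    ∀ A : Set (X × Y), A ⊆ {z : X × Y | IsOpen ({z} : Set (X × Y))} →
      A.Countable → A.Infinite → (closure A \ A).Nonempty := by
  classical
  haveI ht2X : T2Space X := hXpc.2.1
  haveI ht2Y : T2Space Y := hYpc.2.1
  have hcrX : CompletelyRegularSpace X := hXpc.1
  have hcrY : CompletelyRegularSpace Y := hYpc.1
  constructor
  · ext ⟨x, y⟩
    simpa [Set.mem_prod] using iso_prod_iff (x := x) (y := y)
  intro A hAiso hAcnt hAinf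
  have hAx : ∀ p ∈ A, IsOpen ({p.1} : Set X) := by
    intro p hp
    exact (iso_prod_iff.mp (hAiso hp)).1
  have hAy : ∀ p ∈ A, IsOpen ({p.2} : Set Y) := by
    intro p hp
    exact (iso_prod_iff.mp (hAiso hp)).2
  by_cases hline1 : ∃ x : X, {p ∈ A | p.1 = x}.Infinite
  · obtain ⟨x, hx⟩ := hline1
    set B : Set Y := {y : Y | (x, y) ∈ A} with hB
    have hBinf : B.Infinite := by
      intro hfin
      apply hx
      have hsub : {p ∈ A | p.1 = x} ⊆ (fun y => (x, y)) '' B := by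
        rintro ⟨a, b⟩ ⟨hab, h1⟩
        have h1' : a = x := h1
        subst h1'
        exact ⟨b, hab, rfl⟩
      exact (hfin.image _).subset hsub
    have hBcnt : B.Countable :=
      (hAcnt.image Prod.snd).mono (by intro b hb; exact ⟨(x, b), hb, rfl⟩)
    have hBiso : ∀ y ∈ B, IsOpen ({y} : Set Y) :=
      fun y hy => (iso_prod_iff.mp (hAiso hy)).2
    obtain ⟨y0, hy1, hy2⟩ := limit_point_of_isolated hYpc hBiso hBcnt hBinf
    refine ⟨(x, y0), ?_, ?_⟩
    · have h1 : ({x} ×ˢ B : Set (X × Y)) ⊆ A := by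
        rintro ⟨a, b⟩ ⟨ha, hb⟩
        have ha' : a = x := ha
        subst ha'
        exact hb
      have h2 : (x, y0) ∈ closure ({x} ×ˢ B) := by
        rw [closure_prod_eq]
        exact ⟨subset_closure rfl, hy1⟩
      exact closure_mono h1 h2
    · intro hmem
      have hop : IsOpen ({y0} : Set Y) := (iso_prod_iff.mp (hAiso hmem)).2
      rw [mem_closure_iff] at hy1
      obtain ⟨v, hv1, hv2⟩ := hy1 _ hop rfl
      rw [mem_singleton_iff.mp hv1] at hv2
      exact hy2 hv2
  by_cases hline2 : ∃ y : Y, {p ∈ A | p.2 = y}.Infinite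
  · obtain ⟨y, hy⟩ := hline2
    set B : Set X := {x : X | (x, y) ∈ A} with hB
    have hBinf : B.Infinite := by
      intro hfin
      apply hy
      have hsub : {p ∈ A | p.2 = y} ⊆ (fun x => (x, y)) '' B := by
        rintro ⟨a, b⟩ ⟨hab, h1⟩
        have h1' : b = y := h1
        subst h1'
        exact ⟨a, hab, rfl⟩
      exact (hfin.image _).subset hsub
    have hBcnt : B.Countable :=
      (hAcnt.image Prod.fst).mono (by intro a ha; exact ⟨(a, y), ha, rfl⟩)
    have hBiso : ∀ x ∈ B, IsOpen ({x} : Set X) :=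
      fun x hx => (iso_prod_iff.mp (hAiso hx)).1
    obtain ⟨x0, hx1, hx2⟩ := limit_point_of_isolated hXpc hBiso hBcnt hBinf
    refine ⟨(x0, y), ?_, ?_⟩
    · have h1 : (B ×ˢ {y} : Set (X × Y)) ⊆ A := by
        rintro ⟨a, b⟩ ⟨ha, hb⟩
        have hb' : b = y := hb
        subst hb'
        exact ha
      have h2 : (x0, y) ∈ closure (B ×ˢ {y}) := by
        rw [closure_prod_eq]
        exact ⟨hx1, subset_closure rfl⟩
      exact closure_mono h1 h2
    · intro hmem
      have hop : IsOpen ({x0} : Set X) := (iso_prod_iff.mp (hAiso hmem)).1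
      rw [mem_closure_iff] at hx1
      obtain ⟨v, hv1, hv2⟩ := hx1 _ hop rfl
      rw [mem_singleton_iff.mp hv1] at hv2
      exact hx2 hv2
  -- main case: all lines meet A finitely
  push_neg at hline1 hline2
  have hpick : ∀ l : List (X × Y), ∃ a, a ∈ A ∧ ∀ b ∈ l, a.1 ≠ b.1 ∧ a.2 ≠ b.2 := by
    intro l
    have hRem : (⋃ b ∈ l, ({p ∈ A | p.1 = b.1} ∪ {p ∈ A | p.2 = b.2})).Finite := by
      refine Set.Finite.biUnion l.finite_toSet ?_
      intro b _
      exact (hline1 b.1).union (hline2 b.2)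
    obtain ⟨a, ha⟩ := (hAinf.diff hRem).nonempty
    refine ⟨a, ha.1, ?_⟩
    intro b hb
    constructor
    · intro h; exact ha.2 (mem_biUnion hb (Or.inl ⟨ha.1, h⟩))
    · intro h; exact ha.2 (mem_biUnion hb (Or.inr ⟨ha.1, h⟩))
  let pick : List (X × Y) → X × Y := fun l => (hpick l).choose
  have hpick1 : ∀ l, pick l ∈ A := fun l => (hpick l).choose_spec.1
  have hpick2 : ∀ l, ∀ b ∈ l, (pick l).1 ≠ b.1 ∧ (pick l).2 ≠ b.2 :=
    fun l => (hpick l).choose_spec.2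
  let chain : ℕ → List (X × Y) := fun n => Nat.rec [] (fun _ ih => pick ih :: ih) n
  have hchain : ∀ n, chain (n + 1) = pick (chain n) :: chain n := fun _ => rfl
  let z : ℕ → X × Y := fun n => pick (chain n)
  have hzA : ∀ n, z n ∈ A := fun n => hpick1 (chain n)
  have hmemchain : ∀ m n, m < n → z m ∈ chain n := by
    intro m n
    induction n with
    | zero => intro h; exact absurd h (Nat.not_lt_zero m)
    | succ n ih =>
      intro h
      rw [hchain]
      rcases Nat.lt_succ_iff_lt_or_eq.mp h with h | h
      · exact List.mem_cons_of_mem _ (ih h)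
      · rw [h]; exact List.mem_cons_self
  have hxne : ∀ m n, m < n → (z n).1 ≠ (z m).1 ∧ (z n).2 ≠ (z m).2 :=
    fun m n h => hpick2 (chain n) (z m) (hmemchain m n h)
  have hxinj : ∀ m n, (z m).1 = (z n).1 → m = n := by
    intro m n h
    rcases lt_trichotomy m n with hl | he | hl
    · exact absurd h.symm (hxne m n hl).1
    · exact he
    · exact absurd h (hxne n m hl).1
  have hyinj : ∀ m n, (z m).2 = (z n).2 → m = n := by
    intro m n h
    rcases lt_trichotomy m n with hl | he | hl
    · exact absurd h.symm (hxne m n hl).2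
    · exact he
    · exact absurd h (hxne n m hl).2
  have hscX := scattered_of_fc (cptK_fc X hXpc hXfc)
  have hscY := scattered_of_fc (cptK_fc Y hYpc hYfc)
  set wX : ℕ → ↥(cptK X) := fun n => cptE X (z n).1 with hwX
  set wY : ℕ → ↥(cptK Y) := fun n => cptE Y (z n).2 with hwY
  have hwXiso : ∀ n, IsOpen ({wX n} : Set ↥(cptK X)) :=
    fun n => cptE_iso X hcrX (hAx _ (hzA n))
  have hwXinj : Set.InjOn wX Set.univ :=
    fun m _ n _ h => hxinj m n (cptE_inj X ht2X hcrX h)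
  obtain ⟨S1, hS1sub, hS1inf, p, hpni, hpesc⟩ :=
    exists_conv_sub hscX wX hwXiso Set.univ Set.infinite_univ hwXinj
  have hpx : ∃ x0 : X, cptE X x0 = p := by
    by_contra hp
    push_neg at hp
    set T : Set X := (fun n => (z n).1) '' S1 with hT
    have hTcl : closure T ⊆ T := by
      intro u hu
      have h1 : cptE X u ∈ closure (cptE X '' T) :=
        image_closure_subset_closure_image (cptE_cont X) ⟨u, hu, rfl⟩
      have himg : cptE X '' T = wX '' S1 := by rw [hT, Set.image_image]
      rw [himg] at h1
      rcases cl_image_subset wX S1 p hpesc h1 with ⟨n, hn, heq⟩ | heq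
      · exact ⟨n, hn, cptE_inj X ht2X hcrX heq⟩
      · exact (hp u (mem_singleton_iff.mp heq)).elim
    have hTiso : ∀ u ∈ T, IsOpen ({u} : Set X) := by
      rintro _ ⟨n, hn, rfl⟩
      exact hAx _ (hzA n)
    have hTcnt : T.Countable :=
      (hAcnt.image Prod.fst).mono (by rintro _ ⟨n, hn, rfl⟩; exact ⟨z n, hzA n, rfl⟩)
    have hTinf : T.Infinite := by
      intro hfin
      exact hS1inf (Set.Finite.of_finite_image hfin (fun m _ n _ h => hxinj m n h))
    obtain ⟨u, hu1, hu2⟩ := limit_point_of_isolated hXpc hTiso hTcnt hTinf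
    exact hu2 (hTcl hu1)
  obtain ⟨x0, hx0⟩ := hpx
  have hwYiso : ∀ n, IsOpen ({wY n} : Set ↥(cptK Y)) :=
    fun n => cptE_iso Y hcrY (hAy _ (hzA n))
  have hwYinj : Set.InjOn wY S1 :=
    fun m _ n _ h => hyinj m n (cptE_inj Y ht2Y hcrY h)
  obtain ⟨S2, hS2sub, hS2inf, q, hqni, hqesc⟩ :=
    exists_conv_sub hscY wY hwYiso S1 hS1inf hwYinj
  have hqy : ∃ y0 : Y, cptE Y y0 = q := by
    by_contra hq
    push_neg at hq
    set T : Set Y := (fun n => (z n).2) '' S2 with hT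
    have hTcl : closure T ⊆ T := by
      intro u hu
      have h1 : cptE Y u ∈ closure (cptE Y '' T) :=
        image_closure_subset_closure_image (cptE_cont Y) ⟨u, hu, rfl⟩
      have himg : cptE Y '' T = wY '' S2 := by rw [hT, Set.image_image]
      rw [himg] at h1
      rcases cl_image_subset wY S2 q hqesc h1 with ⟨n, hn, heq⟩ | heq
      · exact ⟨n, hn, cptE_inj Y ht2Y hcrY heq⟩
      · exact (hq u (mem_singleton_iff.mp heq)).elim
    have hTiso : ∀ u ∈ T, IsOpen ({u} : Set Y) := by
      rintro _ ⟨n, hn, rfl⟩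
      exact hAy _ (hzA n)
    have hTcnt : T.Countable :=
      (hAcnt.image Prod.snd).mono (by rintro _ ⟨n, hn, rfl⟩; exact ⟨z n, hzA n, rfl⟩)
    have hTinf : T.Infinite := by
      intro hfin
      exact hS2inf (Set.Finite.of_finite_image hfin (fun m _ n _ h => hyinj m n h))
    obtain ⟨u, hu1, hu2⟩ := limit_point_of_isolated hYpc hTiso hTcnt hTinf
    exact hu2 (hTcl hu1)
  obtain ⟨y0, hy0⟩ := hqy
  refine ⟨(x0, y0), ?_, ?_⟩
  · rw [mem_closure_iff]
    intro O hO hzO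
    obtain ⟨U, V, hU, hV, hxU, hyV, hUV⟩ := isOpen_prod_iff.mp hO x0 y0 hzO
    obtain ⟨W1, hW1o, hW1x, hW1sub⟩ := cptE_nhds X hcrX hU hxU
    obtain ⟨W2, hW2o, hW2x, hW2sub⟩ := cptE_nhds Y hcrY hV hyV
    have hf1 : {n | n ∈ S2 ∧ wX n ∉ W1}.Finite := by
      have h := hpesc W1 (hW1o.mem_nhds (hx0 ▸ hW1x))
      exact h.subset (fun n hn => ⟨hS2sub hn.1, hn.2⟩)
    have hf2 : {n | n ∈ S2 ∧ wY n ∉ W2}.Finite :=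
      hqesc W2 (hW2o.mem_nhds (hy0 ▸ hW2x))
    obtain ⟨n, hn⟩ := (hS2inf.diff (hf1.union hf2)).nonempty
    have hn1 : wX n ∈ W1 := by
      by_contra h
      exact hn.2 (Or.inl ⟨hn.1, h⟩)
    have hn2 : wY n ∈ W2 := by
      by_contra h
      exact hn.2 (Or.inr ⟨hn.1, h⟩)
    exact ⟨z n, hUV ⟨hW1sub _ hn1, hW2sub _ hn2⟩, hzA n⟩
  · intro hmem
    have h1 : IsOpen ({x0} : Set X) := (iso_prod_iff.mp (hAiso hmem)).1
    have h2 := cptE_iso X hcrX h1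
    rw [hx0] at h2
    exact hpni h2
end

section
/- Let n be a natural number and let γ_0, ..., γ_{n-1} be ordinals, each endowed with the order topology, such that each γ_i is either a successor ordinal or a limit ordinal of uncountable cofinality. Then the product space ∏_{i<n} γ_i is exponentially separable. -/
open Set Topology

/-- Key step: if `y` is in the closure of `B` and `x < y`, there is `b ∈ B`
with `x < b ≤ y`. -/
lemma ordinal_closure_key {B : Set Ordinal} {x y : Ordinal} (hxy : x < y)
    (hy : y ∈ closure B) : ∃ b ∈ B, x < b ∧ b ≤ y := by
  have hyo : y ∈ Set.Ioo x (y + 1) := ⟨hxy, by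
    rw [Ordinal.add_one_eq_succ]; exact Order.lt_succ y⟩
  obtain ⟨b, hb1, hb2⟩ := mem_closure_iff.1 hy _ isOpen_Ioo hyo
  refine ⟨b, hb2, hb1.1, ?_⟩
  have := hb1.2
  rw [Ordinal.add_one_eq_succ, Order.lt_succ_iff] at this
  exact this

/-- The closure of a countable set of ordinals is countable. -/
lemma ordinal_countable_closure {B : Set Ordinal} (hB : B.Countable) :
    (closure B).Countable := by
  classical
  set S1 : Set Ordinal := {z ∈ closure B | ∃ b ∈ B, z < b} with hS1
  set S2 : Set Ordinal := {z ∈ closure B | ¬ ∃ b ∈ B, z < b} with hS2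
  have hsub : closure B ⊆ S1 ∪ S2 := by
    intro z hz
    by_cases h : ∃ b ∈ B, z < b
    · exact Or.inl ⟨hz, h⟩
    · exact Or.inr ⟨hz, h⟩
  refine Set.Countable.mono hsub (Set.Countable.union ?_ ?_)
  · set f : Ordinal → Ordinal := fun z => sInf {b | b ∈ B ∧ z < b} with hf
    have hmem : ∀ z ∈ S1, f z ∈ B ∧ z < f z := by
      intro z hz
      obtain ⟨b, hb, hzb⟩ := hz.2
      exact csInf_mem (⟨b, hb, hzb⟩ : {b | b ∈ B ∧ z < b}.Nonempty)
    have hinj : Set.InjOn f S1 := by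
      have key : ∀ z w, z ∈ S1 → w ∈ S1 → z < w → f z < f w := by
        intro z w hz hw hzw
        obtain ⟨b, hb, hzb, hbw⟩ := ordinal_closure_key hzw hw.1
        have h1 : f z ≤ b := csInf_le (OrderBot.bddBelow _) ⟨hb, hzb⟩
        have h2 : w < f w := (hmem w hw).2
        exact lt_of_le_of_lt (h1.trans hbw) h2
      intro z hz w hw hzw
      rcases lt_trichotomy z w with h | h | h
      · exact absurd hzw (ne_of_lt (key z w hz hw h))
      · exact h
      · exact absurd hzw.symm (ne_of_lt (key w z hw hz h))
    refine Set.countable_of_injective_of_countable_image hinj ?_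
    exact hB.mono (by rintro _ ⟨z, hz, rfl⟩; exact (hmem z hz).1)
  · refine Set.Subsingleton.countable ?_
    intro z hz w hw
    by_contra hne
    rcases lt_or_gt_of_ne hne with h | h
    · obtain ⟨b, hb, hzb, _⟩ := ordinal_closure_key h hw.1
      exact hz.2 ⟨b, hb, hzb⟩
    · obtain ⟨b, hb, hwb, _⟩ := ordinal_closure_key h hz.1
      exact hw.2 ⟨b, hb, hwb⟩

/-- A countable subset of an ordinal of uncountable cofinality is bounded. -/
lemma ordinal_bounded_of_countable {γ : Ordinal} (hcof : Cardinal.aleph0 < γ.cof)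
    {B : Set Ordinal} (hB : B.Countable) (hBγ : B ⊆ Set.Iio γ) :
    ∃ s, s < γ ∧ B ⊆ Set.Iic s := by
  rcases B.eq_empty_or_nonempty with rfl | hne
  · refine ⟨0, ?_, by simp⟩
    rcases eq_zero_or_pos γ with rfl | h
    · simp [Ordinal.cof_zero] at hcof
    · exact h
  · obtain ⟨g, hg⟩ := Set.Countable.exists_eq_range hB hne
    refine ⟨⨆ n, g n, ?_, ?_⟩
    · refine Ordinal.iSup_lt_ord_lift ?_ ?_
      · simpa using hcof
      · intro n
        exact hBγ (hg ▸ Set.mem_range_self n)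
    · intro b hb
      rw [hg] at hb
      obtain ⟨m, rfl⟩ := hb
      exact le_ciSup (Ordinal.bddAbove_range g) m

/-- If every countable subset of `X` is contained in a countable compact set, then
`X` satisfies the exponential-separability property. -/
lemma expSep_of_countable_compact_covers {X : Type*} [TopologicalSpace X]
    (hX : ∀ S : Set X, S.Countable → ∃ A : Set X, S ⊆ A ∧ A.Countable ∧ IsCompact A) :
    ∀ F : Set (Set X), F.Countable → (∀ s ∈ F, IsClosed s) →
      ∃ A : Set X, A.Countable ∧ ∀ G ⊆ F, (⋂₀ G).Nonempty → (A ∩ ⋂₀ G).Nonempty := by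
  classical
  intro F hF hFc
  set T : Set (Set (Set X)) := {t | (t.Finite ∧ t ⊆ F) ∧ (⋂₀ t).Nonempty} with hT
  have hTc : T.Countable := by
    refine Set.Countable.mono ?_ (Set.countable_setOf_finite_subset hF)
    intro t ht
    exact ⟨ht.1.1, ht.1.2⟩
  have := hTc.to_subtype
  set x : T → X := fun t => t.2.2.some with hxdef
  have hxmem : ∀ t : T, x t ∈ ⋂₀ (t : Set (Set X)) := fun t => t.2.2.some_mem
  obtain ⟨A, hSA, hAc, hAcpt⟩ := hX (Set.range x) (Set.countable_range x)
  have hxA : ∀ t : T, x t ∈ A := fun t => hSA ⟨t, rfl⟩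
  refine ⟨A, hAc, ?_⟩
  intro G hGF hGne
  rw [Set.sInter_eq_iInter]
  by_contra hcon
  rw [Set.not_nonempty_iff_eq_empty] at hcon
  obtain ⟨u, hu⟩ := hAcpt.elim_finite_subfamily_closed (fun C : G => (C : Set X))
    (fun C => hFc C (hGF C.2)) hcon
  set t0 : Set (Set X) := Subtype.val '' (↑u : Set ↥G) with ht0def
  have ht0 : t0 ∈ T := by
    refine ⟨⟨u.finite_toSet.image _, ?_⟩, ?_⟩
    · rintro _ ⟨C, _, rfl⟩
      exact hGF C.2
    · obtain ⟨y, hy⟩ := hGne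
      refine ⟨y, ?_⟩
      rintro _ ⟨C, _, rfl⟩
      exact hy _ C.2
  have h2 : x ⟨t0, ht0⟩ ∈ A ∩ ⋂ C ∈ u, (C : Set X) := by
    refine ⟨hxA ⟨t0, ht0⟩, ?_⟩
    rw [Set.mem_iInter₂]
    intro C hC
    exact hxmem ⟨t0, ht0⟩ _ ⟨C, hC, rfl⟩
  rw [hu] at h2
  exact h2

/-- Every countable subset of the product of our ordinal spaces is contained in a
countable compact subset. -/
lemma prod_ordinals_countable_compact_covers
    (n : ℕ) (γ : Fin n → Ordinal)
    (hγ : ∀ i, (∃ β, γ i = β + 1) ∨ (Order.IsSuccLimit (γ i) ∧ Cardinal.aleph0 < (γ i).cof))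
    (S : Set (Π i : Fin n, ↥(Set.Iio (γ i)))) (hS : S.Countable) :
    ∃ A : Set (Π i : Fin n, ↥(Set.Iio (γ i))),
      S ⊆ A ∧ A.Countable ∧ IsCompact A := by
  classical
  have := hS.to_subtype
  set B : Fin n → Set Ordinal := fun i => Set.range (fun p : S => (p.1 i).1)
    with hB
  have hBc : ∀ i, (B i).Countable := fun i => Set.countable_range _
  have hBγ : ∀ i, B i ⊆ Set.Iio (γ i) := by
    rintro i _ ⟨p, rfl⟩
    exact (p.1 i).2
  have hbound : ∀ i, ∃ s, s < γ i ∧ closure (B i) ⊆ Set.Iic s := by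
    intro i
    rcases hγ i with ⟨β, hβ⟩ | ⟨hlim, hcof⟩
    · refine ⟨β, ?_, closure_minimal ?_ isClosed_Iic⟩
      · rw [hβ, Ordinal.add_one_eq_succ]; exact Order.lt_succ β
      · intro b hb
        have := hBγ i hb
        rw [hβ, Ordinal.add_one_eq_succ, Set.mem_Iio, Order.lt_succ_iff] at this
        exact this
    · obtain ⟨s, hs, hsub⟩ := ordinal_bounded_of_countable hcof (hBc i) (hBγ i)
      exact ⟨s, hs, closure_minimal hsub isClosed_Iic⟩
  choose s hs hssub using hbound
  have hclIio : ∀ i, closure (B i) ⊆ Set.Iio (γ i) := fun i =>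
    (hssub i).trans (fun b hb => lt_of_le_of_lt hb (hs i))
  have hclcpt : ∀ i, IsCompact (closure (B i)) := by
    intro i
    have h1 : IsCompact (Set.Iic (s i)) := by
      have := isCompact_Icc (a := (0 : Ordinal)) (b := s i)
      rwa [← Ordinal.bot_eq_zero, Set.Icc_bot] at this
    exact h1.of_isClosed_subset isClosed_closure (hssub i)
  refine ⟨Set.univ.pi (fun i => (Subtype.val ⁻¹' closure (B i))), ?_, ?_, ?_⟩
  · intro p hp
    rw [Set.mem_univ_pi]
    intro i
    exact subset_closure ⟨⟨p, hp⟩, rfl⟩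
  · exact Set.countable_univ_pi
      (fun i => (ordinal_countable_closure (hBc i)).preimage Subtype.val_injective)
  · refine isCompact_univ_pi (fun i => ?_)
    rw [Topology.IsEmbedding.subtypeVal.isCompact_iff]
    have himg : Subtype.val '' (Subtype.val ⁻¹' closure (B i)
        : Set ↥(Set.Iio (γ i))) = closure (B i) := by
      rw [Set.image_preimage_eq_inter_range, Subtype.range_coe]
      exact Set.inter_eq_left.2 (hclIio i)
    rw [himg]
    exact hclcpt i

/-- A space `X` is exponentially separable if, for every countable family `F`
of closed subsets of `X`, there is a countable set `A ⊆ X` that is strongly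
dense in `F`: `A` meets `⋂₀ G` for every subfamily `G ⊆ F` whose intersection
is nonempty. -/
def ExponentiallySeparable (X : Type*) [TopologicalSpace X] : Prop :=
  ∀ F : Set (Set X), F.Countable → (∀ s ∈ F, IsClosed s) →
    ∃ A : Set X, A.Countable ∧ ∀ G ⊆ F, (⋂₀ G).Nonempty → (A ∩ ⋂₀ G).Nonempty

/-- A finite product of ordinals (each with its order
topology), each of which is a successor ordinal or a limit ordinal of
uncountable cofinality, is exponentially separable. -/
theorem finite_prod_ordinals_exponentiallySeparable
    (n : ℕ) (γ : Fin n → Ordinal)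
    (hγ : ∀ i, (∃ β, γ i = β + 1) ∨ (Order.IsSuccLimit (γ i) ∧ Cardinal.aleph0 < (γ i).cof)) :
    ExponentiallySeparable (Π i : Fin n, ↥(Set.Iio (γ i))) := by
  exact expSep_of_countable_compact_covers
    (prod_ordinals_countable_compact_covers n γ hγ)
end

section
/- Let λ be a cardinal and let {γ_ξ : ξ < λ} be ordinals, each endowed with the order topology, such that each γ_ξ is either a successor ordinal or a limit ordinal of uncountable cofinality. Let m be a natural number, let X_m denote the set of all points x of the product ∏_{ξ<λ} γ_ξ such that x(ξ) ≠ 0 for at most m many indices ξ, and for a set t of indices of size m+1 let S_t denote the set of points x with {ξ : x(ξ) ≠ 0} = t. If G is a closed subset of the subspace X_{m+1}, then either the family {t ∈ [λ]^{m+1} : G ∩ S_t ≠ ∅} is countable, or G ∩ X_m ≠ ∅. -/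
open Filter Set

/-- Let `λ` be a cardinal and `γ_ξ` (for ordinals `ξ < λ`) be
ordinals, each a successor or a limit of uncountable cofinality.  For `n : ℕ`,
`X_n` is the set of points of `∏_{ξ<λ} γ_ξ` with at most `n` nonzero
coordinates, and for a set `t` of indices, `S_t` is the set of points whose
support equals `t`.  If `G ⊆ X_{m+1}` is closed in the subspace `X_{m+1}`,
then either `{t ∈ [λ]^{m+1} : G ∩ S_t ≠ ∅}` is countable or `G ∩ X_m ≠ ∅`. -/
theorem closed_subset_sigma_layer_dichotomy
    (lam : Cardinal) (γ : ↥(Set.Iio lam.ord) → Ordinal)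
    (hγ : ∀ ξ, (∃ β, γ ξ = β + 1) ∨ (Order.IsSuccLimit (γ ξ) ∧ Cardinal.aleph0 < (γ ξ).cof))
    (m : ℕ)
    (G : Set (Π ξ : ↥(Set.Iio lam.ord), ↥(Set.Iio (γ ξ))))
    (hGsub : G ⊆ {x | {ξ | (x ξ : Ordinal) ≠ 0}.encard ≤ ((m + 1 : ℕ) : ℕ∞)})
    (hGclosed : IsClosed
      {y : ↥{x : Π ξ : ↥(Set.Iio lam.ord), ↥(Set.Iio (γ ξ)) |
          {ξ | (x ξ : Ordinal) ≠ 0}.encard ≤ ((m + 1 : ℕ) : ℕ∞)} |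
        (y : Π ξ : ↥(Set.Iio lam.ord), ↥(Set.Iio (γ ξ))) ∈ G}) :
    {t : Set ↥(Set.Iio lam.ord) | t.encard = ((m + 1 : ℕ) : ℕ∞) ∧
        (G ∩ {x | {ξ | (x ξ : Ordinal) ≠ 0} = t}).Nonempty}.Countable ∨
      (G ∩ {x | {ξ | (x ξ : Ordinal) ≠ 0}.encard ≤ ((m : ℕ) : ℕ∞)}).Nonempty := by
  set T : Set (Set ↥(Set.Iio lam.ord)) := {t | t.encard = ((m + 1 : ℕ) : ℕ∞) ∧
      (G ∩ {x | {ξ | (x ξ : Ordinal) ≠ 0} = t}).Nonempty} with hTdef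
  by_cases hc : T.Countable
  · exact Or.inl hc
  right
  have hT : T.Infinite := fun h => hc h.countable
  set e := hT.natEmbedding with he
  set t : ℕ → Set ↥(Set.Iio lam.ord) := fun n => (e n : Set ↥(Set.Iio lam.ord)) with htdef
  have ht_inj : Function.Injective t := fun a b h => e.injective (Subtype.ext h)
  have ht_card : ∀ n, (t n).encard = ((m + 1 : ℕ) : ℕ∞) := fun n => (e n).2.1
  have hne : ∀ n, (G ∩ {x | {ξ | (x ξ : Ordinal) ≠ 0} = t n}).Nonempty := fun n => (e n).2.2
  choose x hx using hne
  have hxG : ∀ n, x n ∈ G := fun n => (hx n).1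
  have hxsupp : ∀ n, {ξ | ((x n ξ : Ordinal)) ≠ 0} = t n := fun n => (hx n).2
  set U : Ultrafilter ℕ := Filter.hyperfilter ℕ with hU
  -- the set of ultrafilter-bounds at each coordinate
  set S : ↥(Set.Iio lam.ord) → Set Ordinal :=
    fun ξ => {b | {n | ((x n ξ : Ordinal)) ≤ b} ∈ U} with hS
  have hSmem : ∀ ξ, (⨆ n, ((x n ξ : Ordinal))) ∈ S ξ := by
    intro ξ
    have : {n | ((x n ξ : Ordinal)) ≤ ⨆ n, ((x n ξ : Ordinal))} = Set.univ := by
      ext n; simp [Ordinal.le_iSup (fun n => ((x n ξ : Ordinal))) n]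
    show {n | ((x n ξ : Ordinal)) ≤ ⨆ n, ((x n ξ : Ordinal))} ∈ U
    rw [this]
    exact Filter.univ_mem
  have hSne : ∀ ξ, (S ξ).Nonempty := fun ξ => ⟨_, hSmem ξ⟩
  have hsuplt : ∀ ξ, (⨆ n, ((x n ξ : Ordinal))) < γ ξ := by
    intro ξ
    rcases hγ ξ with ⟨β, hβ⟩ | ⟨_, hcof⟩
    · have hle : ∀ n, ((x n ξ : Ordinal)) ≤ β := fun n =>
        Order.lt_succ_iff.1 (lt_of_lt_of_le (x n ξ).2 (le_of_eq hβ))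
      refine lt_of_le_of_lt (Ordinal.iSup_le fun n => hle n) ?_
      rw [hβ]; exact Order.lt_succ β
    · exact Ordinal.iSup_lt_ord_lift (c := γ ξ) (by simpa using hcof) fun n => (x n ξ).2
  set b : ↥(Set.Iio lam.ord) → Ordinal := fun ξ => sInf (S ξ) with hb
  have hbmem : ∀ ξ, b ξ ∈ S ξ := fun ξ => csInf_mem (hSne ξ)
  have hblt : ∀ ξ, b ξ < γ ξ :=
    fun ξ => lt_of_le_of_lt (csInf_le (OrderBot.bddBelow _) (hSmem ξ)) (hsuplt ξ)
  have hbmin : ∀ ξ, ∀ a < b ξ, {n | a < ((x n ξ : Ordinal))} ∈ U := by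
    intro ξ a ha
    have hnm : a ∉ S ξ := fun h => absurd (csInf_le (OrderBot.bddBelow _) h) (not_le.2 ha)
    have h2 : {n | ((x n ξ : Ordinal)) ≤ a}ᶜ ∈ U := (Ultrafilter.compl_mem_iff_notMem).2 hnm
    convert h2 using 1
    ext n; simp
  set y : Π ξ : ↥(Set.Iio lam.ord), ↥(Set.Iio (γ ξ)) := fun ξ => ⟨b ξ, hblt ξ⟩ with hy
  -- the support of y has size at most m
  have hsupp : {ξ | ((y ξ : Ordinal)) ≠ 0}.encard ≤ ((m : ℕ) : ℕ∞) := by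
    by_contra h
    push_neg at h
    have h' : ((m + 1 : ℕ) : ℕ∞) ≤ {ξ | ((y ξ : Ordinal)) ≠ 0}.encard := by
      have := Order.add_one_le_of_lt h
      simpa [Nat.cast_add] using this
    obtain ⟨s, hs_sub, hs_card⟩ := Set.exists_subset_encard_eq h'
    have hs_fin : s.Finite := Set.finite_of_encard_eq_coe hs_card
    set N : Set ℕ := ⋂ ξ ∈ s, {n | ((x n ξ : Ordinal)) ≠ 0} with hN
    have hN_mem : N ∈ U := by
      rw [← Ultrafilter.mem_coe] at *
      rw [hN, Filter.biInter_mem hs_fin]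
      intro ξ hξ
      have hbne : b ξ ≠ 0 := hs_sub hξ
      have h3 := hbmin ξ 0 (pos_iff_ne_zero.2 hbne)
      rw [Ultrafilter.mem_coe]
      convert h3 using 1
      ext n; simp [pos_iff_ne_zero]
    have hN_inf : N.Infinite := by
      by_contra hfin
      rw [Set.not_infinite] at hfin
      exact Set.Finite.notMem_hyperfilter hfin hN_mem
    have hts : ∀ n ∈ N, t n = s := by
      intro n hn
      have h1 : s ⊆ t n := by
        intro ξ hξ
        have h4 : ((x n ξ : Ordinal)) ≠ 0 := Set.mem_iInter₂.1 hn ξ hξ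
        rw [← hxsupp n]; exact h4
      have h2 : (t n).encard ≤ s.encard := by rw [hs_card, ht_card]
      exact (((Set.finite_of_encard_eq_coe (ht_card n)).eq_of_subset_of_encard_le' h1 h2)).symm
    have himg : (t '' N).Infinite := hN_inf.image (ht_inj.injOn)
    refine himg (Set.Finite.subset (Set.finite_singleton s) ?_)
    rintro _ ⟨n, hn, rfl⟩
    simp [hts n hn]
  -- convergence of the sequence to y along the ultrafilter
  have hconv : ∀ ξ, Tendsto (fun n => ((x n ξ : Ordinal))) (U : Filter ℕ) (nhds (b ξ)) := by
    intro ξ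
    refine tendsto_order.2 ⟨fun a ha => ?_, fun c hc => ?_⟩
    · exact Filter.eventually_iff.2 (Ultrafilter.mem_coe.2 (hbmin ξ a ha))
    · have h5 : {n | ((x n ξ : Ordinal)) ≤ b ξ} ∈ U := hbmem ξ
      refine Filter.eventually_iff.2 (Filter.mem_of_superset (Ultrafilter.mem_coe.2 h5) ?_)
      intro n hn
      exact lt_of_le_of_lt hn hc
  have hconv' : ∀ ξ, Tendsto (fun n => x n ξ) (U : Filter ℕ) (nhds (y ξ)) :=
    fun ξ => tendsto_subtype_rng.2 (hconv ξ)
  have hprod : Tendsto (fun n => x n) (U : Filter ℕ) (nhds y) := tendsto_pi_nhds.2 hconv'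
  -- pass to the subspace X_{m+1}
  have hyX : y ∈ {x : Π ξ : ↥(Set.Iio lam.ord), ↥(Set.Iio (γ ξ)) |
      {ξ | (x ξ : Ordinal) ≠ 0}.encard ≤ ((m + 1 : ℕ) : ℕ∞)} :=
    le_trans hsupp (by exact_mod_cast Nat.cast_le.2 (Nat.le_succ m))
  have hprodX : Tendsto (fun n => (⟨x n, hGsub (hxG n)⟩ :
      ↥{x : Π ξ : ↥(Set.Iio lam.ord), ↥(Set.Iio (γ ξ)) |
        {ξ | (x ξ : Ordinal) ≠ 0}.encard ≤ ((m + 1 : ℕ) : ℕ∞)}))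
      (U : Filter ℕ) (nhds ⟨y, hyX⟩) :=
    tendsto_subtype_rng.2 hprod
  have hyG : y ∈ G :=
    hGclosed.mem_of_tendsto hprodX (Filter.Eventually.of_forall fun n => hxG n)
  exact ⟨y, hyG, hsupp⟩
end

section
/- Let λ be a cardinal and let {γ_ξ : ξ < λ} be ordinals, each endowed with the order topology, such that each γ_ξ is either a successor ordinal or a limit ordinal of uncountable cofinality. Let m be a natural number and let X_m and X_{m+1} denote the subspaces of the product ∏_{ξ<λ} γ_ξ consisting of points with at most m (respectively at most m+1) nonzero coordinates. If {G_i : i < ω} is a decreasing sequence of closed subsets of X_{m+1} (G_{i+1} ⊆ G_i for all i) such that G_i ∩ X_m ≠ ∅ for all i < ω, then (⋂_{i<ω} G_i) ∩ X_m ≠ ∅. -/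
open Filter Topology Set

/-- Let `λ` be a cardinal and `γ_ξ` (for ordinals `ξ < λ`) be
ordinals, each a successor or a limit of uncountable cofinality.  For `n : ℕ`,
`X_n` is the set of points of `∏_{ξ<λ} γ_ξ` with at most `n` nonzero
coordinates.  If `G_i` is a decreasing sequence of closed subsets of the
subspace `X_{m+1}` with `G_i ∩ X_m ≠ ∅` for all `i`, then
`(⋂_i G_i) ∩ X_m ≠ ∅`. -/
theorem decreasing_closed_sets_meet_lower_layer
    (lam : Cardinal) (γ : ↥(Set.Iio lam.ord) → Ordinal)
    (hγ : ∀ ξ, (∃ β, γ ξ = β + 1) ∨ (Order.IsSuccLimit (γ ξ) ∧ Cardinal.aleph0 < (γ ξ).cof))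
    (m : ℕ)
    (G : ℕ → Set (Π ξ : ↥(Set.Iio lam.ord), ↥(Set.Iio (γ ξ))))
    (hGsub : ∀ i, G i ⊆ {x | {ξ | (x ξ : Ordinal) ≠ 0}.encard ≤ ((m + 1 : ℕ) : ℕ∞)})
    (hGclosed : ∀ i, IsClosed
      {y : ↥{x : Π ξ : ↥(Set.Iio lam.ord), ↥(Set.Iio (γ ξ)) |
          {ξ | (x ξ : Ordinal) ≠ 0}.encard ≤ ((m + 1 : ℕ) : ℕ∞)} |
        (y : Π ξ : ↥(Set.Iio lam.ord), ↥(Set.Iio (γ ξ))) ∈ G i})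
    (hGdec : ∀ i, G (i + 1) ⊆ G i)
    (hGne : ∀ i, (G i ∩ {x | {ξ | (x ξ : Ordinal) ≠ 0}.encard ≤ ((m : ℕ) : ℕ∞)}).Nonempty) :
    ((⋂ i, G i) ∩ {x | {ξ | (x ξ : Ordinal) ≠ 0}.encard ≤ ((m : ℕ) : ℕ∞)}).Nonempty := by
  classical
  choose x hxG hxm using fun i => (hGne i)
  set U : Ultrafilter ℕ := Filter.hyperfilter ℕ with hUdef
  have hUcof : ∀ s : Set ℕ, s ∈ (Filter.cofinite : Filter ℕ) → s ∈ U := by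
    intro s hs; exact Filter.hyperfilter_le_cofinite hs
  -- coordinatewise limits along U
  have key : ∀ ξ, ∃ a : Ordinal, a < γ ξ ∧
      Filter.Tendsto (fun i => ((x i ξ : Ordinal))) (U : Filter ℕ) (𝓝 a) := by
    intro ξ
    set f : ℕ → Ordinal := fun i => (x i ξ : Ordinal) with hf
    have hbdd : BddAbove (Set.range f) := Ordinal.bddAbove_range f
    set b : Ordinal := ⨆ i, f i with hbdef
    have hfb : ∀ i, f i ≤ b := fun i => le_ciSup hbdd i
    have hblt : b < γ ξ := by
      rcases hγ ξ with ⟨β, hβ⟩ | ⟨hlim, hcof⟩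
      · have hβlt : β < γ ξ := by rw [hβ]; exact lt_add_one β
        have : ∀ i, f i ≤ β := by
          intro i
          have h2 := (x i ξ).2
          simp only [Set.mem_Iio, hβ] at h2
          exact Order.lt_add_one_iff.mp h2
        exact lt_of_le_of_lt (ciSup_le this) hβlt
      · rw [hbdef]
        exact Ordinal.iSup_lt_ord_lift (f := f) (c := γ ξ)
          (by simpa [Cardinal.mk_nat] using hcof)
          (fun i => Set.mem_Iio.mp (x i ξ).2)
    have hcomp : IsCompact (Set.Icc (0 : Ordinal) b) := isCompact_Icc
    have hmem : (U.map f : Filter Ordinal) ≤ 𝓟 (Set.Icc 0 b) := by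
      refine Filter.le_principal_iff.mpr ?_
      refine Filter.mem_map.mpr (Filter.univ_mem' ?_)
      intro i; exact ⟨zero_le (a := f i), hfb i⟩
    obtain ⟨a, ha, hle⟩ := hcomp.ultrafilter_le_nhds (U.map f) hmem
    exact ⟨a, lt_of_le_of_lt ha.2 hblt, hle⟩
  choose α hαlt hα using key
  set X : Π ξ : ↥(Set.Iio lam.ord), ↥(Set.Iio (γ ξ)) := fun ξ => ⟨α ξ, hαlt ξ⟩ with hXdef
  -- support of the limit
  have hne_ev : ∀ ξ, α ξ ≠ 0 → {i | (x i ξ : Ordinal) ≠ 0} ∈ (U : Filter ℕ) := by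
    intro ξ hξ
    have hpos : (0 : Ordinal) < α ξ := pos_iff_ne_zero.mpr hξ
    have h1 : Set.Ioi (0 : Ordinal) ∈ 𝓝 (α ξ) := isOpen_Ioi.mem_nhds hpos
    have h2 := (hα ξ) h1
    refine Filter.mem_of_superset h2 ?_
    intro i hi
    exact (ne_of_gt hi)
  have hXsupp : {ξ | (X ξ : Ordinal) ≠ 0}.encard ≤ ((m : ℕ) : ℕ∞) := by
    by_contra hcon
    have hlt : ((m : ℕ) : ℕ∞) < {ξ | (X ξ : Ordinal) ≠ 0}.encard := not_le.mp hcon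
    have hle : ((m + 1 : ℕ) : ℕ∞) ≤ {ξ | (X ξ : Ordinal) ≠ 0}.encard := by
      rw [Nat.cast_add, Nat.cast_one]
      exact Order.add_one_le_of_lt hlt
    obtain ⟨t, hts, htcard⟩ := Set.exists_subset_encard_eq hle
    have htfin : t.Finite := Set.finite_of_encard_eq_coe htcard
    have hbig : (⋂ ξ ∈ t, {i | (x i ξ : Ordinal) ≠ 0}) ∈ (U : Filter ℕ) := by
      rw [Filter.biInter_mem htfin]
      intro ξ hξt
      exact hne_ev ξ (hts hξt)
    obtain ⟨i, hi⟩ := Filter.nonempty_of_mem hbig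
    simp only [Set.mem_iInter, Set.mem_setOf_eq] at hi
    have hsub : t ⊆ {ξ | (x i ξ : Ordinal) ≠ 0} := fun ξ hξ => hi ξ hξ
    have := (Set.encard_le_encard hsub).trans (hxm i)
    rw [htcard] at this
    norm_cast at this
    omega
  -- convergence in the product
  have hT : Filter.Tendsto (fun i => x i) (U : Filter ℕ) (𝓝 X) := by
    rw [tendsto_pi_nhds]
    intro ξ
    exact tendsto_subtype_rng.mpr (hα ξ)
  -- work in the subspace X_{m+1}
  have hXm1 : ∀ z : Π ξ : ↥(Set.Iio lam.ord), ↥(Set.Iio (γ ξ)),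
      {ξ | (z ξ : Ordinal) ≠ 0}.encard ≤ ((m : ℕ) : ℕ∞) →
      {ξ | (z ξ : Ordinal) ≠ 0}.encard ≤ ((m + 1 : ℕ) : ℕ∞) := by
    intro z hz
    exact hz.trans (Nat.cast_le.mpr (Nat.le_succ m))
  set S : Set (Π ξ : ↥(Set.Iio lam.ord), ↥(Set.Iio (γ ξ))) :=
    {x | {ξ | (x ξ : Ordinal) ≠ 0}.encard ≤ ((m + 1 : ℕ) : ℕ∞)} with hSdef
  set y : ℕ → ↥S := fun i => ⟨x i, hXm1 _ (hxm i)⟩ with hydef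
  set Y : ↥S := ⟨X, hXm1 _ hXsupp⟩ with hYdef
  have hTy : Filter.Tendsto y (U : Filter ℕ) (𝓝 Y) := tendsto_subtype_rng.mpr hT
  have hanti : Antitone G := antitone_nat_of_succ_le hGdec
  have hXG : ∀ i, X ∈ G i := by
    intro i
    have hev : ∀ᶠ j in (U : Filter ℕ), y j ∈ {y' : ↥S | y'.1 ∈ G i} := by
      have htail : {j : ℕ | i ≤ j} ∈ (U : Filter ℕ) := by
        apply hUcof
        simp only [Filter.mem_cofinite]
        have : {j : ℕ | i ≤ j}ᶜ ⊆ Set.Iio i := by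
          intro j hj
          simp only [Set.mem_compl_iff, Set.mem_setOf_eq, not_le] at hj
          exact hj
        exact (Set.finite_Iio i).subset this
      refine Filter.mem_of_superset htail ?_
      intro j hj
      exact hanti hj (hxG j)
    exact (hGclosed i).mem_of_tendsto hTy hev
  exact ⟨X, Set.mem_iInter.mpr hXG, hXsupp⟩
end

section
/- Let λ be a cardinal and let {γ_ξ : ξ < λ} be ordinals, each endowed with the order topology, such that each γ_ξ is either a successor ordinal or a limit ordinal of uncountable cofinality. Then the σ-product σ(∏_{ξ<λ} γ_ξ, 0), i.e., the subspace of the product ∏_{ξ<λ} γ_ξ consisting of all points x such that x(ξ) ≠ 0 for only finitely many ξ, is exponentially separable. -/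
universe u

/-- The set of ordinals that equal the sup of the elements of `W` weakly below them. -/
def supsSet (W : Set Ordinal.{u}) : Set Ordinal.{u} :=
  {β | β = sSup (W ∩ Set.Iic β)}

lemma countable_supsSet {W : Set Ordinal.{u}} (hW : W.Countable) (h0 : (0 : Ordinal.{u}) ∈ W) :
    (supsSet W).Countable := by
  classical
  set B : Set Ordinal.{u} := supsSet W \ (W ∪ {sSup W}) with hB
  set g : Ordinal.{u} → Ordinal.{u} := fun β => sInf {v | v ∈ W ∧ β < v} with hg
  have hne : ∀ β ∈ B, {v | v ∈ W ∧ β < v}.Nonempty := by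
    intro β hβ
    by_contra hcon
    rw [Set.not_nonempty_iff_eq_empty] at hcon
    have hWle : ∀ v ∈ W, v ≤ β := by
      intro v hv
      by_contra hlt
      have hmem : v ∈ {v | v ∈ W ∧ β < v} := ⟨hv, lt_of_not_ge hlt⟩
      rw [hcon] at hmem
      exact hmem
    have hWeq : W ∩ Set.Iic β = W := by
      ext v; exact ⟨fun h => h.1, fun h => ⟨h, hWle v h⟩⟩
    have : β = sSup W := by
      have := hβ.1; rw [supsSet, Set.mem_setOf_eq, hWeq] at this; exact this
    exact hβ.2 (Or.inr this)
  have hgmem : ∀ β ∈ B, g β ∈ W ∧ β < g β := fun β hβ => csInf_mem (hne β hβ)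
  have hmono : ∀ β₁ ∈ B, ∀ β₂ ∈ B, β₁ < β₂ → g β₁ < g β₂ := by
    intro β₁ hβ₁ β₂ hβ₂ hlt
    have hβ₂W : β₂ ∉ W := fun h => hβ₂.2 (Or.inl h)
    obtain ⟨v, hvW, hv1, hv2⟩ : ∃ v, v ∈ W ∧ β₁ < v ∧ v < β₂ := by
      by_contra hno
      push_neg at hno
      have hsub2 : W ∩ Set.Iic β₂ ⊆ Set.Iic β₁ := by
        intro v hv
        have hvlt : v < β₂ := lt_of_le_of_ne hv.2 (fun h => hβ₂W (h ▸ hv.1))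
        by_contra hgt
        exact absurd hvlt (not_lt_of_ge (hno v hv.1 (lt_of_not_ge hgt)))
      have : β₂ ≤ β₁ := by
        have h2 := hβ₂.1
        rw [supsSet, Set.mem_setOf_eq] at h2
        rw [h2]
        exact csSup_le ⟨0, h0, Set.mem_Iic.2 zero_le⟩ (fun b hb => hsub2 hb)
      exact absurd hlt (not_lt_of_ge this)
    calc g β₁ ≤ v := csInf_le' ⟨hvW, hv1⟩
      _ < β₂ := hv2
      _ < g β₂ := (hgmem β₂ hβ₂).2
  have hinj : Set.InjOn g B := by
    intro a ha b hb hab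
    rcases lt_trichotomy a b with h | h | h
    · exact absurd hab (ne_of_lt (hmono a ha b hb h))
    · exact h
    · exact absurd hab.symm (ne_of_lt (hmono b hb a ha h))
  have hBc : B.Countable := by
    refine Set.countable_of_injective_of_countable_image hinj (hW.mono ?_)
    rintro _ ⟨β, hβ, rfl⟩
    exact (hgmem β hβ).1
  have hsub : supsSet W ⊆ (W ∪ {sSup W}) ∪ B := by
    intro x hx
    by_cases h : x ∈ W ∪ {sSup W}
    · exact Or.inl h
    · exact Or.inr ⟨hx, h⟩
  exact (((hW.union (Set.countable_singleton _)).union hBc)).mono hsub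

/-- Let `λ` be a cardinal and `γ_ξ` (for ordinals `ξ < λ`) be
ordinals with their order topologies, each a successor or a limit of
uncountable cofinality.  Then the σ-product `σ(∏_{ξ<λ} γ_ξ, 0)`, i.e. the
subspace of points with finite support, is exponentially separable. -/
theorem sigmaProduct_exponentiallySeparable_of_succ_or_uncountable_cof
    (lam : Cardinal) (γ : ↥(Set.Iio lam.ord) → Ordinal)
    (hγ : ∀ ξ, (∃ β, γ ξ = β + 1) ∨ (Order.IsSuccLimit (γ ξ) ∧ Cardinal.aleph0 < (γ ξ).cof)) :
    ExponentiallySeparable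
      ↥{x : Π ξ : ↥(Set.Iio lam.ord), ↥(Set.Iio (γ ξ)) |
          {ξ | (x ξ : Ordinal) ≠ 0}.Finite} := by
  classical
  set Y := {x : Π ξ : ↥(Set.Iio lam.ord), ↥(Set.Iio (γ ξ)) |
      {ξ | (x ξ : Ordinal) ≠ 0}.Finite} with hY
  intro F hFc hFcl
  have hpos : ∀ ξ : ↥(Set.Iio lam.ord), (0 : Ordinal) < γ ξ := by
    intro ξ
    rcases hγ ξ with ⟨β, hβ⟩ | ⟨hl, _⟩
    · rw [hβ]
      exact lt_of_lt_of_le zero_lt_one (le_add_self : (1 : Ordinal) ≤ β + 1)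
    · exact hl.pos
  -- enumerate the family, together with `univ`
  obtain ⟨f, hf⟩ := (hFc.insert Set.univ).exists_eq_range ⟨Set.univ, Set.mem_insert _ _⟩
  have hfcl : ∀ i, IsClosed (f i) := by
    intro i
    have hmem : f i ∈ insert Set.univ F := by rw [hf]; exact Set.mem_range_self i
    rcases Set.mem_insert_iff.1 hmem with h | h
    · rw [h]; exact isClosed_univ
    · exact hFcl _ h
  -- supports
  set spt : ↥Y → Set ↥(Set.Iio lam.ord) := fun x => {ξ | (x.1 ξ : Ordinal) ≠ 0} with hspt
  have hsptfin : ∀ x : ↥Y, (spt x).Finite := fun x => x.2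
  -- the zero point
  have hz0 : (fun ξ => (⟨0, hpos ξ⟩ : ↥(Set.Iio (γ ξ)))) ∈ Y := by
    have : {ξ : ↥(Set.Iio lam.ord) |
        ((⟨0, hpos ξ⟩ : ↥(Set.Iio (γ ξ))) : Ordinal) ≠ 0} = ∅ := by
      ext ξ; simp
    rw [hY, Set.mem_setOf_eq, this]
    exact Set.finite_empty
  set z0 : ↥Y := ⟨_, hz0⟩ with hz0'
  -- choose, for each finite subfamily, a point of minimal support size in its intersection
  have hex : ∀ s : Finset ℕ, ∃ y : ↥Y, (⋂ i ∈ s, f i).Nonempty →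
      y ∈ (⋂ i ∈ s, f i) ∧ ∀ w ∈ (⋂ i ∈ s, f i), (spt y).ncard ≤ (spt w).ncard := by
    intro s
    by_cases h : (⋂ i ∈ s, f i).Nonempty
    · have hne : {n : ℕ | ∃ y ∈ (⋂ i ∈ s, f i), (spt y).ncard = n}.Nonempty :=
        ⟨(spt h.choose).ncard, h.choose, h.choose_spec, rfl⟩
      obtain ⟨y, hy, hyc⟩ := Nat.sInf_mem hne
      refine ⟨y, fun _ => ⟨hy, fun w hw => ?_⟩⟩
      rw [hyc]
      exact Nat.sInf_le ⟨w, hw, rfl⟩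
    · exact ⟨z0, fun hn => absurd hn h⟩
  choose p hp using hex
  -- value sets, bounds, supports
  set V : ↥(Set.Iio lam.ord) → Set Ordinal := fun ξ =>
    insert 0 (Set.range fun s : Finset ℕ => ((p s).1 ξ : Ordinal)) with hV
  have hVc : ∀ ξ, (V ξ).Countable := fun ξ => (Set.countable_range _).insert 0
  have h0V : ∀ ξ, (0 : Ordinal) ∈ V ξ := fun ξ => Set.mem_insert _ _
  have hbd : ∀ ξ, ∃ b, b < γ ξ ∧ ∀ s : Finset ℕ, ((p s).1 ξ : Ordinal) ≤ b := by
    intro ξ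
    rcases hγ ξ with ⟨β, hβ⟩ | ⟨hl, hcof⟩
    · refine ⟨β, ?_, ?_⟩
      · rw [hβ, Ordinal.add_one_eq_succ]; exact Order.lt_succ β
      · intro s
        refine Order.lt_succ_iff.1 ?_
        rw [← Ordinal.add_one_eq_succ, ← hβ]
        exact ((p s).1 ξ).2
    · refine ⟨iSup (fun t : ULift (Finset ℕ) => ((p t.down).1 ξ : Ordinal)), ?_, ?_⟩
      · refine Ordinal.iSup_lt_ord ?_ (fun t => ((p t.down).1 ξ).2)
        exact lt_of_le_of_lt Cardinal.mk_le_aleph0 hcof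
      · exact fun s => Ordinal.le_iSup
          (fun t : ULift (Finset ℕ) => ((p t.down).1 ξ : Ordinal)) (ULift.up s)
  choose b hblt hble using hbd
  set J : Set ↥(Set.Iio lam.ord) := ⋃ s : Finset ℕ, spt (p s) with hJ
  have hJc : J.Countable := Set.countable_iUnion fun s => (hsptfin (p s)).countable
  -- the candidate countable set
  set A : Set ↥Y := {x | spt x ⊆ J ∧ ∀ ξ, ((x.1 ξ : Ordinal)) ∈ supsSet (V ξ)} with hA
  have hAc : A.Countable := by
    have h1 : {T : Set ↥(Set.Iio lam.ord) | T.Finite ∧ T ⊆ J}.Countable :=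
      Set.countable_setOf_finite_subset hJc
    have h2 : A ⊆ ⋃ T ∈ {T : Set ↥(Set.Iio lam.ord) | T.Finite ∧ T ⊆ J},
        {x : ↥Y | spt x = T ∧ ∀ ξ, ((x.1 ξ : Ordinal)) ∈ supsSet (V ξ)} := by
      intro x hxA
      exact Set.mem_biUnion ⟨hsptfin x, hxA.1⟩ ⟨rfl, hxA.2⟩
    refine Set.Countable.mono h2 (Set.Countable.biUnion h1 ?_)
    intro T hT
    haveI : Finite ↥T := hT.1.to_subtype
    set Φ : ↥Y → (Π ξ : ↥T, ↥(Set.Iio (γ (ξ : ↥(Set.Iio lam.ord))))) :=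
      fun x ξ => x.1 ξ with hΦ
    refine Set.countable_of_injective_of_countable_image (f := Φ) ?_ ?_
    · rintro a ⟨haT, -⟩ c ⟨hcT, -⟩ h
      apply Subtype.ext; funext ξ
      by_cases hξ : ξ ∈ T
      · exact congrFun h ⟨ξ, hξ⟩
      · apply Subtype.ext
        have ha0 : (a.1 ξ : Ordinal) = 0 := by
          by_contra h0
          exact hξ (haT ▸ (h0 : ξ ∈ spt a))
        have hc0 : (c.1 ξ : Ordinal) = 0 := by
          by_contra h0
          exact hξ (hcT ▸ (h0 : ξ ∈ spt c))
        rw [ha0, hc0]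
    · have h3 : (Φ '' {x : ↥Y | spt x = T ∧ ∀ ξ, ((x.1 ξ : Ordinal)) ∈ supsSet (V ξ)}) ⊆
          {g : Π ξ : ↥T, ↥(Set.Iio (γ (ξ : ↥(Set.Iio lam.ord)))) |
            ∀ ξ : ↥T, g ξ ∈ (Subtype.val ⁻¹' (supsSet (V ξ.1)))} := by
        rintro - ⟨x, ⟨-, hall⟩, rfl⟩ ξ
        exact hall ξ
      refine Set.Countable.mono h3 (Set.countable_pi fun ξ => ?_)
      exact (countable_supsSet (hVc _) (h0V _)).preimage Subtype.val_injective
  refine ⟨A, hAc, ?_⟩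
  rintro G hGF ⟨x, hx⟩
  set N : Set ℕ := {i | x ∈ f i} with hN
  set s : ℕ → Finset ℕ := fun k => (Finset.range k).filter (fun i => i ∈ N) with hs
  have hxC : ∀ k, x ∈ ⋂ i ∈ s k, f i := by
    intro k
    refine Set.mem_iInter₂.2 fun i hi => ?_
    exact (Finset.mem_filter.1 hi).2
  set q : ℕ → ↥Y := fun k => p (s k) with hq
  have hqC : ∀ k, q k ∈ ⋂ i ∈ s k, f i := fun k => (hp (s k) ⟨x, hxC k⟩).1
  have hqcard : ∀ k, (spt (q k)).ncard ≤ (spt x).ncard :=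
    fun k => (hp (s k) ⟨x, hxC k⟩).2 x (hxC k)
  set U : Ultrafilter ℕ := Filter.hyperfilter ℕ with hU
  set qo : ↥(Set.Iio lam.ord) → ℕ → Ordinal := fun ξ k => ((q k).1 ξ : Ordinal) with hqo
  have hqoV : ∀ ξ k, qo ξ k ∈ V ξ := fun ξ k => Set.mem_insert_iff.2 (Or.inr ⟨s k, rfl⟩)
  set S : ↥(Set.Iio lam.ord) → Set Ordinal :=
    fun ξ => {α | {k | qo ξ k ≤ α} ∈ (U : Filter ℕ)} with hS
  have hSne : ∀ ξ, (b ξ) ∈ S ξ := by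
    intro ξ
    have hu : {k | qo ξ k ≤ b ξ} = Set.univ := Set.eq_univ_of_forall fun k => hble ξ (s k)
    show {k | qo ξ k ≤ b ξ} ∈ (U : Filter ℕ)
    rw [hu]
    exact Filter.univ_mem
  set β : ↥(Set.Iio lam.ord) → Ordinal := fun ξ => sInf (S ξ) with hβ
  have hβmem : ∀ ξ, β ξ ∈ S ξ := fun ξ => csInf_mem ⟨b ξ, hSne ξ⟩
  have hβle : ∀ ξ, β ξ ≤ b ξ := fun ξ => csInf_le' (hSne ξ)
  have hβγ : ∀ ξ, β ξ < γ ξ := fun ξ => lt_of_le_of_lt (hβle ξ) (hblt ξ)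
  have hlow : ∀ ξ c, c < β ξ → {k | c < qo ξ k} ∈ (U : Filter ℕ) := by
    intro ξ c hc
    have hnot : {k | qo ξ k ≤ c} ∉ (U : Filter ℕ) := by
      intro hmem
      have hcS : c ∈ S ξ := hmem
      exact absurd (csInf_le' hcS) (not_le.2 hc)
    have hcompl : {k | c < qo ξ k} = {k | qo ξ k ≤ c}ᶜ := by
      ext k; simp [not_le]
    rw [hcompl]
    rw [Ultrafilter.mem_coe] at hnot ⊢
    exact (Ultrafilter.compl_mem_iff_notMem).2 hnot
  have htendo : ∀ ξ, Filter.Tendsto (qo ξ) (U : Filter ℕ) (nhds (β ξ)) := by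
    intro ξ
    rw [tendsto_order]
    constructor
    · intro c hc
      exact Filter.eventually_iff.2 (hlow ξ c hc)
    · intro c hc
      refine Filter.eventually_iff.2 (Filter.mem_of_superset (hβmem ξ) ?_)
      exact fun k hk => lt_of_le_of_lt hk hc
  have hfinβ : {ξ | β ξ ≠ 0}.Finite := by
    by_contra hinf
    obtain ⟨T, hTsub, hTfin, hTcard⟩ :=
      Set.Infinite.exists_subset_ncard_eq (hinf : Set.Infinite _) ((spt x).ncard + 1)
    have hUmem : (⋂ ξ ∈ hTfin.toFinset, {k | 0 < qo ξ k}) ∈ (U : Filter ℕ) := by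
      rw [Filter.biInter_finset_mem]
      intro ξ hξ
      refine hlow ξ 0 ?_
      have : β ξ ≠ 0 := hTsub (hTfin.mem_toFinset.1 hξ)
      exact pos_iff_ne_zero.2 this
    obtain ⟨k, hk⟩ := Filter.nonempty_of_mem hUmem
    have hTsub2 : T ⊆ spt (q k) := by
      intro ξ hξ
      have := Set.mem_iInter₂.1 hk ξ (hTfin.mem_toFinset.2 hξ)
      exact ne_of_gt this
    have : T.ncard ≤ (spt (q k)).ncard := Set.ncard_le_ncard hTsub2 (hsptfin (q k))
    rw [hTcard] at this
    exact absurd (le_trans this (hqcard k)) (by omega)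
  set xs : ↥Y := ⟨fun ξ => ⟨β ξ, hβγ ξ⟩, hfinβ⟩ with hxs
  have htends : Filter.Tendsto q (U : Filter ℕ) (nhds xs) := by
    rw [Topology.IsEmbedding.subtypeVal.tendsto_nhds_iff]
    rw [tendsto_pi_nhds]
    intro ξ
    rw [Topology.IsEmbedding.subtypeVal.tendsto_nhds_iff]
    exact htendo ξ
  have hxsf : ∀ i ∈ N, xs ∈ f i := by
    intro i hi
    refine (hfcl i).mem_of_tendsto htends ?_
    have hev : ∀ᶠ k in (Filter.cofinite : Filter ℕ), q k ∈ f i := by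
      rw [Nat.cofinite_eq_atTop]
      refine Filter.eventually_atTop.2 ⟨i + 1, fun k hk => ?_⟩
      have his : i ∈ s k := Finset.mem_filter.2 ⟨Finset.mem_range.2 (Nat.lt_of_succ_le hk), hi⟩
      exact Set.mem_iInter₂.1 (hqC k) i his
    exact Filter.hyperfilter_le_cofinite hev
  have hsptxs : spt xs ⊆ J := by
    intro ξ hξ
    by_contra hξJ
    have hall : ∀ k, qo ξ k = 0 := by
      intro k
      by_contra hne0
      exact hξJ (Set.mem_iUnion.2 ⟨s k, hne0⟩)
    have h0S : (0 : Ordinal) ∈ S ξ := by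
      show {k | qo ξ k ≤ 0} ∈ (U : Filter ℕ)
      have : {k | qo ξ k ≤ 0} = Set.univ :=
        Set.eq_univ_of_forall fun k => le_of_eq (hall k)
      rw [this]; exact Filter.univ_mem
    have hle0 : β ξ ≤ 0 := csInf_le' h0S
    exact (hξ : β ξ ≠ 0) (le_antisymm hle0 (zero_le))
  have hsups : ∀ ξ, β ξ ∈ supsSet (V ξ) := by
    intro ξ
    show β ξ = sSup (V ξ ∩ Set.Iic (β ξ))
    refine le_antisymm ?_ ?_
    · refine le_of_forall_lt fun c hc => ?_
      obtain ⟨k, hk1, hk2⟩ :=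
        Filter.nonempty_of_mem (Filter.inter_mem (hlow ξ c hc) (hβmem ξ))
      have hmem : qo ξ k ∈ V ξ ∩ Set.Iic (β ξ) := ⟨hqoV ξ k, hk2⟩
      exact lt_of_lt_of_le hk1 (le_csSup ⟨β ξ, fun v hv => hv.2⟩ hmem)
    · exact csSup_le ⟨0, h0V ξ, Set.mem_Iic.2 zero_le⟩ fun v hv => hv.2
  have hxsA : xs ∈ A := ⟨hsptxs, hsups⟩
  refine ⟨xs, hxsA, ?_⟩
  intro t ht
  have htF : t ∈ insert Set.univ F := Set.mem_insert_iff.2 (Or.inr (hGF ht))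
  rw [hf] at htF
  obtain ⟨i, rfl⟩ := htF
  exact hxsf i (Set.mem_sInter.1 hx (f i) ht)
end

section
/- Let λ be a cardinal and let {γ_ξ : ξ < λ} be nonzero ordinals, each endowed with the order topology. Then the σ-product σ(∏_{ξ<λ} γ_ξ, 0), i.e., the subspace of the product ∏_{ξ<λ} γ_ξ consisting of all points x such that x(ξ) ≠ 0 for only finitely many ξ, is exponentially separable. -/
set_option maxHeartbeats 1600000
set_option linter.unusedSectionVars false
set_option linter.unusedVariables false

namespace ESProof

open Set Order

/-! ### Generic machinery: an `ω₁`-like initial part of a well-order on an uncountable type -/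

section OT

variable {α : Type*} [LinearOrder α] [WellFoundedLT α]

/-- The initial part of a well-order consisting of points with countably many predecessors. -/
abbrev OT (α : Type*) [LinearOrder α] := {a : α // {b : α | b < a}.Countable}

theorem OT.countable_Iio (a : OT α) : {b : OT α | b < a}.Countable := by
  have h1 : ({b : α | b < (a : α)}).Countable := a.2
  have h2 := h1.preimage (f := (Subtype.val : OT α → α)) Subtype.val_injective
  exact h2.mono (fun b hb => by exact_mod_cast hb)

theorem OT.countable_Iic (a : OT α) : {b : OT α | b ≤ a}.Countable := by
  have : {b : OT α | b ≤ a} ⊆ {b : OT α | b < a} ∪ {a} := by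
    intro b hb
    rcases lt_or_eq_of_le (hb : b ≤ a) with h | h
    · exact Or.inl h
    · exact Or.inr (by simp [Subtype.ext h])
  exact ((OT.countable_Iio a).union (Set.countable_singleton a)).mono this

theorem OT.exists_gt (hα : ¬(Set.univ : Set α).Countable) (T : Set (OT α)) (hT : T.Countable) : ∃ b : OT α, ∀ t ∈ T, t < b := by
  classical
  set U : Set α := ⋃ t ∈ T, {c : α | c ≤ (t : α)} with hU
  have hUc : U.Countable := by
    refine hT.biUnion (fun t _ => ?_)
    have : {c : α | c ≤ (t : α)} ⊆ {c : α | c < (t : α)} ∪ {(t : α)} := by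
      intro c hc
      rcases lt_or_eq_of_le (hc : c ≤ (t : α)) with h | h
      · exact Or.inl h
      · exact Or.inr (by simp [h])
    exact (t.2.union (Set.countable_singleton _)).mono this
  have hne : (Uᶜ).Nonempty := by
    by_contra h
    rw [Set.not_nonempty_iff_eq_empty, Set.compl_empty_iff] at h
    exact hα (h ▸ hUc)
  set x := (wellFounded_lt (α := α)).min Uᶜ hne with hx
  have hxU : x ∈ Uᶜ := WellFounded.min_mem _ _ _
  have hIio : {b : α | b < x}.Countable := by
    refine hUc.mono (fun b hb => ?_)
    by_contra hbU
    exact (WellFounded.not_lt_min (wellFounded_lt (α := α)) Uᶜ (hbU : b ∈ Uᶜ)) hb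
  refine ⟨⟨x, hIio⟩, fun t ht => ?_⟩
  have : ¬ (x ≤ (t : α)) := by
    intro hle
    exact hxU (Set.mem_biUnion ht hle)
  exact Subtype.mk_lt_mk.mpr (lt_of_not_ge this)

theorem OT.uncountable (hα : ¬(Set.univ : Set α).Countable) : ¬(Set.univ : Set (OT α)).Countable := by
  intro h
  obtain ⟨b, hb⟩ := OT.exists_gt hα Set.univ h
  exact lt_irrefl b (hb b (Set.mem_univ b))

theorem OT.nonempty (hα : ¬(Set.univ : Set α).Countable) : Nonempty (OT α) := by
  by_contra h
  rw [not_nonempty_iff] at h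
  exact OT.uncountable hα (Set.countable_univ)

theorem OT.unbounded (hα : ¬(Set.univ : Set α).Countable) {S : Set (OT α)} (hS : ¬S.Countable) (b : OT α) : ∃ s ∈ S, b < s := by
  by_contra h
  push_neg at h
  exact hS ((OT.countable_Iic b).mono (fun s hs => h s hs))

/-- Greedy transfinite extraction: an order-preserving reindexing into an uncountable subset,
along which a given ordinal-valued function is moreover nondecreasing. -/
theorem OT.greedy (hα : ¬(Set.univ : Set α).Countable) {S : Set (OT α)} (hS : ¬S.Countable) (g : OT α → Ordinal) :
    ∃ e : OT α → OT α, StrictMono e ∧ (∀ i, e i ∈ S) ∧ ∀ i j, i ≤ j → g (e i) ≤ g (e j) := by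
  classical
  let C : ∀ i : OT α, (∀ j, j < i → OT α) → Set (OT α) :=
    fun i rec => {s | s ∈ S ∧ ∀ j (h : j < i), rec j h < s}
  have hCne : ∀ i rec, (C i rec).Nonempty := by
    intro i rec
    have hcnt : {x : OT α | ∃ j, ∃ h : j < i, rec j h = x}.Countable := by
      have hJ : Countable {j : OT α // j < i} := (OT.countable_Iio i).to_subtype
      have : {x : OT α | ∃ j, ∃ h : j < i, rec j h = x} ⊆
          Set.range (fun p : {j : OT α // j < i} => rec p.1 p.2) := by
        rintro x ⟨j, h, rfl⟩
        exact ⟨⟨j, h⟩, rfl⟩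
      exact (Set.countable_range _).mono this
    obtain ⟨b, hb⟩ := OT.exists_gt hα _ hcnt
    obtain ⟨s, hsS, hbs⟩ := OT.unbounded hα hS b
    exact ⟨s, hsS, fun j h => lt_trans (hb _ ⟨j, h, rfl⟩) hbs⟩
  have hwf : WellFounded (InvImage (· < ·) g) := InvImage.wf g Ordinal.lt_wf
  let pick : ∀ i : OT α, (∀ j, j < i → OT α) → OT α := fun i rec =>
    hwf.min (C i rec) (hCne i rec)
  let e : OT α → OT α := (wellFounded_lt (α := OT α)).fix pick
  have hee : ∀ i, e i = pick i (fun j _ => e j) :=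
    fun i => WellFounded.fix_eq (wellFounded_lt (α := OT α)) pick i
  have he : ∀ i, e i ∈ C i (fun j _ => e j) := by
    intro i
    rw [hee i]
    exact WellFounded.min_mem _ _ _
  have hmono : StrictMono e := fun a b hab => (he b).2 a hab
  refine ⟨e, hmono, fun i => (he i).1, ?_⟩
  intro i j hij
  rcases eq_or_lt_of_le hij with rfl | h
  · exact le_rfl
  have hCj : e j ∈ C i (fun j _ => e j) := ⟨(he j).1, fun k hk => hmono (hk.trans h)⟩
  have hnot := WellFounded.not_lt_min hwf (C i (fun j _ => e j)) hCj
  rw [hee i]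
  exact le_of_not_gt hnot

end OT

section Space

variable {lam : Cardinal} {γ : ↥(Set.Iio lam.ord) → Ordinal}

abbrev Idx (lam : Cardinal) := ↥(Set.Iio lam.ord)

abbrev Sp (lam : Cardinal) (γ : Idx lam → Ordinal) :=
  ↥{x : Π ξ : ↥(Set.Iio lam.ord), ↥(Set.Iio (γ ξ)) | {ξ | (x ξ : Ordinal) ≠ 0}.Finite}

/-- Coordinate value, as an ordinal. -/
def cv (x : Sp lam γ) (ξ : Idx lam) : Ordinal := (x.1 ξ : Ordinal)

theorem cv_lt (x : Sp lam γ) (ξ : Idx lam) : cv x ξ < γ ξ := (x.1 ξ).2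

theorem sp_ext {x y : Sp lam γ} (h : ∀ ξ, cv x ξ = cv y ξ) : x = y :=
  Subtype.ext (funext fun ξ => Subtype.ext (h ξ))

/-- The support, as a finset. -/
noncomputable def suppF (x : Sp lam γ) : Finset (Idx lam) := x.2.toFinset

theorem mem_suppF {x : Sp lam γ} {ξ : Idx lam} : ξ ∈ suppF x ↔ cv x ξ ≠ 0 :=
  x.2.mem_toFinset

/-- Coordinatewise (pointwise) order. -/
def lec (x y : Sp lam γ) : Prop := ∀ ξ, cv x ξ ≤ cv y ξ

/-- Strict coordinatewise order. -/
def ltc (x y : Sp lam γ) : Prop := lec x y ∧ x ≠ y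

/-- Rank: natural (Hessenberg) sum of all coordinates. -/
noncomputable def rk (x : Sp lam γ) : Idx lam →₀ Ordinal :=
  Finsupp.onFinset (suppF x) (cv x) (fun ξ h => mem_suppF.2 h)

theorem rk_lt {x y : Sp lam γ} (h : ltc x y) : rk x < rk y := by
  have hle : rk x ≤ rk y := Finsupp.le_def.2 (fun ξ => by
    simp only [rk, Finsupp.onFinset_apply]
    exact h.1 ξ)
  refine lt_of_le_of_ne hle (fun heq => h.2 (sp_ext fun ξ => ?_))
  have := DFunLike.congr_fun heq ξ
  simpa [rk, Finsupp.onFinset_apply] using this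

theorem ltc_wf : WellFounded (ltc (lam := lam) (γ := γ)) :=
  Subrelation.wf (fun h => rk_lt h) (InvImage.wf rk
    (Finsupp.wellFoundedLT (N := Ordinal) (fun n hn => absurd hn (not_lt_of_ge zero_le))).wf)

/-- The candidate countable strongly dense set: points that are minimal witnesses
of their own trace on `F`. -/
def Mset (F : Set (Set (Sp lam γ))) : Set (Sp lam γ) :=
  {a | ∀ b, ltc b a → ∃ C ∈ F, a ∈ C ∧ b ∉ C}

/-- Basic neighborhood lemma for ordinals: any open set around a nonzero ordinal `o`
contains a half-open interval `(b, o]`. -/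
theorem ord_nbhd {W : Set Ordinal} (hW : IsOpen W) {o : Ordinal} (ho : o ∈ W) (h0 : o ≠ 0) :
    ∃ b, b < o ∧ ∀ t, b < t → t ≤ o → t ∈ W := by
  rcases Ordinal.zero_or_succ_or_isSuccLimit o with h | ⟨a, rfl⟩ | h
  · exact absurd h h0
  · refine ⟨a, Order.lt_succ a, fun t h1 h2 => ?_⟩
    have : t = Order.succ a := le_antisymm h2 (Order.succ_le_of_lt h1)
    rwa [this]
  · obtain ⟨b, hb, hIoo⟩ := (Ordinal.isOpen_iff).1 hW o ho h
    refine ⟨b, hb, fun t h1 h2 => ?_⟩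
    rcases eq_or_lt_of_le h2 with rfl | h3
    · exact ho
    · exact hIoo ⟨h1, h3⟩

/-! ### Structured sequences and their limit points -/

structure Pack (lam : Cardinal) (γ : Idx lam → Ordinal) (F : Set (Set (Sp lam γ)))
    (α : Type*) [LinearOrder α] [WellFoundedLT α] where
  m : OT α → Sp lam γ
  R : Finset (Idx lam)
  hmem : ∀ i, m i ∈ Mset F
  hinj : Function.Injective m
  hroot : ∀ i, ∀ ξ ∈ R, cv (m i) ξ ≠ 0
  hoff : ∀ ξ ∉ R, {i | cv (m i) ξ ≠ 0}.Finite
  hmono : ∀ ξ ∈ R, ∀ i j : OT α, i ≤ j → cv (m i) ξ ≤ cv (m j) ξ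
  hbnd : ∀ ξ ∈ R, ∀ s : Set (OT α), s.Countable → ∃ c, c < γ ξ ∧ ∀ μ ∈ s, cv (m μ) ξ ≤ c

variable {F : Set (Set (Sp lam γ))} {α : Type*} [LinearOrder α] [WellFoundedLT α]

noncomputable def zval (P : Pack lam γ F α) (l : OT α) (ξ : Idx lam) : Ordinal :=
  if ξ ∈ P.R then sInf {c | c < γ ξ ∧ ∀ μ, μ < l → cv (P.m μ) ξ ≤ c} else 0

theorem zset_nonempty (P : Pack lam γ F α) (l : OT α) {ξ : Idx lam} (hξ : ξ ∈ P.R) :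
    {c | c < γ ξ ∧ ∀ μ, μ < l → cv (P.m μ) ξ ≤ c}.Nonempty := by
  obtain ⟨c, h1, h2⟩ := P.hbnd ξ hξ {μ | μ < l} (OT.countable_Iio l)
  exact ⟨c, h1, fun μ h => h2 μ h⟩

theorem zval_mem (P : Pack lam γ F α) (l : OT α) {ξ : Idx lam} (hξ : ξ ∈ P.R) :
    zval P l ξ < γ ξ ∧ ∀ μ, μ < l → cv (P.m μ) ξ ≤ zval P l ξ := by
  have h := csInf_mem (zset_nonempty P l hξ)
  rw [zval, if_pos hξ]
  exact h

theorem zval_lt_gamma (hγ : ∀ ξ, γ ξ ≠ 0) (P : Pack lam γ F α) (l : OT α) (ξ : Idx lam) :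
    zval P l ξ < γ ξ := by
  by_cases hξ : ξ ∈ P.R
  · exact (zval_mem P l hξ).1
  · rw [zval, if_neg hξ]
    exact pos_iff_ne_zero.2 (hγ ξ)

noncomputable def zpt (hγ : ∀ ξ, γ ξ ≠ 0) (P : Pack lam γ F α) (l : OT α) : Sp lam γ :=
  ⟨fun ξ => ⟨zval P l ξ, Set.mem_Iio.2 (zval_lt_gamma hγ P l ξ)⟩, by
    refine (P.R.finite_toSet).subset (fun ξ hξ => ?_)
    simp only [Set.mem_setOf_eq] at hξ
    by_contra hR
    apply hξ
    show zval P l ξ = 0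
    rw [zval, if_neg (fun hc => hR (Finset.mem_coe.2 hc))]⟩

theorem cv_zpt (hγ : ∀ ξ, γ ξ ≠ 0) (P : Pack lam γ F α) (l : OT α) (ξ : Idx lam) :
    cv (zpt hγ P l) ξ = zval P l ξ := rfl

theorem zle (P : Pack lam γ F α) (l : OT α) {ξ : Idx lam} (hξ : ξ ∈ P.R) {μ : OT α}
    (hμ : μ < l) : cv (P.m μ) ξ ≤ zval P l ξ := (zval_mem P l hξ).2 μ hμ

theorem zapprox (P : Pack lam γ F α) (l : OT α) {ξ : Idx lam} (hξ : ξ ∈ P.R) {b : Ordinal}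
    (hb : b < zval P l ξ) : ∃ μ, μ < l ∧ b < cv (P.m μ) ξ := by
  by_contra h
  push_neg at h
  have hmem : b ∈ {c | c < γ ξ ∧ ∀ μ, μ < l → cv (P.m μ) ξ ≤ c} :=
    ⟨hb.trans (zval_mem P l hξ).1, h⟩
  have hle := csInf_le' hmem
  rw [zval, if_pos hξ] at hb
  exact absurd hle (not_le.2 hb)

theorem zlec (hγ : ∀ ξ, γ ξ ≠ 0) (P : Pack lam γ F α) {l l' : OT α} (h : l ≤ l') :
    lec (zpt hγ P l) (P.m l') := by
  intro ξ
  rw [cv_zpt]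
  by_cases hξ : ξ ∈ P.R
  · rw [zval, if_pos hξ]
    refine csInf_le' ⟨cv_lt _ _, fun μ hμ => ?_⟩
    exact P.hmono ξ hξ μ l' (le_of_lt (lt_of_lt_of_le hμ h))
  · rw [zval, if_neg hξ]
    exact zero_le

theorem zpos (P : Pack lam γ F α) (l : OT α) (hne : ∃ β, β < l) {ξ : Idx lam} (hξ : ξ ∈ P.R) :
    zval P l ξ ≠ 0 := by
  obtain ⟨β, hβ⟩ := hne
  have h1 : cv (P.m β) ξ ≤ zval P l ξ := zle P l hξ hβ
  have h2 : cv (P.m β) ξ ≠ 0 := P.hroot β ξ hξ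
  intro h0
  rw [h0] at h1
  exact h2 (nonpos_iff_eq_zero.1 h1)

/-- The key cluster-point lemma: the canonical limit `zpt` of a structured sequence along `l`
belongs to every closed set that contains the sequence along a cofinal set `T` below `l`. -/
theorem zpt_mem_closed (hγ : ∀ ξ, γ ξ ≠ 0) (P : Pack lam γ F α) {C : Set (Sp lam γ)}
    (hC : IsClosed C) {l : OT α} {T : Set (OT α)} (hTl : ∀ t ∈ T, t < l)
    (hacc : ∀ β, β < l → ∃ t ∈ T, β < t) (hne : ∃ β, β < l)
    (hTC : ∀ t ∈ T, P.m t ∈ C) : zpt hγ P l ∈ C := by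
  classical
  have hsub : P.m '' T ⊆ C := by
    rintro y ⟨t, ht, rfl⟩
    exact hTC t ht
  refine closure_minimal hsub hC ?_
  rw [mem_closure_iff]
  intro o ho hzo
  obtain ⟨V, hV, hVeq⟩ := isOpen_induced_iff.1 ho
  have hzV : (zpt hγ P l).1 ∈ V := by
    rw [← hVeq] at hzo
    exact hzo
  obtain ⟨D, u, hDu, hpi⟩ := (isOpen_pi_iff.1 hV) _ hzV
  -- thresholds on root coordinates
  have hthr : ∀ ξ, ξ ∈ D → ξ ∈ P.R → ∃ μ, μ < l ∧ ∀ t, μ ≤ t → t < l → (P.m t).1 ξ ∈ u ξ := by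
    intro ξ hξD hξR
    obtain ⟨W, hWo, hWeq⟩ := isOpen_induced_iff.1 (hDu ξ hξD).1
    have hzW : zval P l ξ ∈ W := by
      have h2 := (hDu ξ hξD).2
      rw [← hWeq] at h2
      exact h2
    obtain ⟨b, hb, hIoc⟩ := ord_nbhd hWo hzW (zpos P l hne hξR)
    obtain ⟨μ, hμl, hμb⟩ := zapprox P l hξR hb
    refine ⟨μ, hμl, fun t hμt htl => ?_⟩
    have h1 : b < cv (P.m t) ξ := lt_of_lt_of_le hμb (P.hmono ξ hξR μ t hμt)
    have h2 : cv (P.m t) ξ ≤ zval P l ξ := zle P l hξR htl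
    have : cv (P.m t) ξ ∈ W := hIoc _ h1 h2
    rw [← hWeq]
    exact this
  -- finitely many bad indices for off-root coordinates of D
  set Bd : Set (OT α) := ⋃ ξ ∈ (↑D \ ↑P.R : Set (Idx lam)), {i : OT α | cv (P.m i) ξ ≠ 0}
    with hBdd
  have hBd : Bd.Finite :=
    Set.Finite.biUnion (D.finite_toSet.sdiff) (fun ξ hξ => P.hoff ξ hξ.2)
  -- combine the finitely many thresholds
  obtain ⟨β₀, hβ₀⟩ := hne
  set th : Idx lam → OT α := fun ξ =>
    if h : ξ ∈ D ∧ ξ ∈ P.R then (hthr ξ h.1 h.2).choose else β₀ with hthdef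
  have hthl : ∀ ξ, th ξ < l := by
    intro ξ
    by_cases h : ξ ∈ D ∧ ξ ∈ P.R
    · simp only [hthdef, dif_pos h]
      exact (hthr ξ h.1 h.2).choose_spec.1
    · simp only [hthdef, dif_neg h]
      exact hβ₀
  set TH : Finset (OT α) := insert β₀ (D.image th) with hTHdef
  have hTHne : TH.Nonempty := ⟨β₀, Finset.mem_insert_self _ _⟩
  set β₁ := TH.max' hTHne with hβ₁def
  have hβ₁l : β₁ < l := by
    rcases Finset.mem_insert.1 (TH.max'_mem hTHne) with h | h
    · rw [hβ₁def, h]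
      exact hβ₀
    · obtain ⟨ξ, -, hξ⟩ := Finset.mem_image.1 h
      rw [hβ₁def, ← hξ]
      exact hthl ξ
  -- find a suitable index t
  have hcof' : ∃ t, t ∈ T ∧ β₁ < t ∧ t ∉ Bd := by
    by_contra h
    push_neg at h
    have hS'fin : {t | t ∈ T ∧ β₁ < t}.Finite := hBd.subset (fun t ht => h t ht.1 ht.2)
    have hne2 : hS'fin.toFinset.Nonempty := by
      rw [Set.Finite.toFinset_nonempty]
      obtain ⟨t, ht, hβt⟩ := hacc β₁ hβ₁l
      exact ⟨t, ht, hβt⟩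
    set t₂ := hS'fin.toFinset.max' hne2 with ht₂def
    have ht₂ : t₂ ∈ T ∧ β₁ < t₂ := by
      have h2 := hS'fin.toFinset.max'_mem hne2
      rwa [Set.Finite.mem_toFinset] at h2
    obtain ⟨t₃, ht₃T, ht₂t₃⟩ := hacc t₂ (hTl _ ht₂.1)
    have ht₃mem : t₃ ∈ hS'fin.toFinset := by
      rw [Set.Finite.mem_toFinset]
      exact ⟨ht₃T, lt_trans ht₂.2 ht₂t₃⟩
    exact absurd (Finset.le_max' _ _ ht₃mem) (not_le.2 ht₂t₃)
  obtain ⟨t, htT, hβ₁t, htBd⟩ := hcof'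
  refine ⟨P.m t, ?_, Set.mem_image_of_mem _ htT⟩
  rw [← hVeq]
  show (P.m t).1 ∈ V
  refine hpi ((Set.mem_pi).2 (fun ξ hξD => ?_))
  have hξDf : ξ ∈ D := Finset.mem_coe.1 hξD
  by_cases hξR : ξ ∈ P.R
  · have hsp := (hthr ξ hξDf hξR).choose_spec
    refine hsp.2 t ?_ (hTl t htT)
    have h1 : th ξ = (hthr ξ hξDf hξR).choose := dif_pos ⟨hξDf, hξR⟩
    have h2 : th ξ ∈ TH := Finset.mem_insert_of_mem (Finset.mem_image_of_mem th hξDf)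
    have h3 : (hthr ξ hξDf hξR).choose ≤ β₁ := h1 ▸ Finset.le_max' _ _ h2
    exact (lt_of_le_of_lt h3 hβ₁t).le
  · have ht0 : cv (P.m t) ξ = 0 := by
      by_contra h0
      exact htBd (Set.mem_biUnion (⟨hξD, hξR⟩ : ξ ∈ (↑D \ ↑P.R : Set (Idx lam))) h0)
    have hval : (P.m t).1 ξ = (zpt hγ P l).1 ξ := by
      apply Subtype.ext
      show cv (P.m t) ξ = zval P l ξ
      rw [ht0, zval, if_neg hξR]
    rw [hval]
    exact (hDu ξ hξDf).2

variable {α : Type*} [LinearOrder α] [WellFoundedLT α]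

/-- The `j`-th element of the support of `m i`, for sequences with constant support size. -/
noncomputable def pvv {n : ℕ} (m : OT α → Sp lam γ) (hc : ∀ i, (suppF (m i)).card = n)
    (j : Fin n) (i : OT α) : Idx lam :=
  (suppF (m i)).orderEmbOfFin (hc i) j

theorem exists_pack (F : Set (Set (Sp lam γ)))
    (hα : ¬(Set.univ : Set α).Countable) (m₀ : OT α → Sp lam γ)
    (hm₀ : ∀ i, m₀ i ∈ Mset F) (hinj₀ : Function.Injective m₀) :
    Nonempty (Pack lam γ F α) := by
  classical
  -- Step 1: constant support size
  obtain ⟨n, hn⟩ : ∃ n : ℕ, ¬ {i | (suppF (m₀ i)).card = n}.Countable := by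
    by_contra h
    push_neg at h
    refine OT.uncountable hα ?_
    have hcov : (Set.univ : Set (OT α)) ⊆ ⋃ n : ℕ, {i | (suppF (m₀ i)).card = n} :=
      fun i _ => Set.mem_iUnion.2 ⟨_, rfl⟩
    exact (Set.countable_iUnion h).mono hcov
  obtain ⟨e₁, he₁, he₁m, -⟩ := OT.greedy hα hn (fun _ => (0 : Ordinal.{0}))
  -- Step 2: each position is either constant or injective
  have key2 : ∀ k : ℕ, k ≤ n → ∃ (m : OT α → Sp lam γ) (hc : ∀ i, (suppF (m i)).card = n),
      (∀ i, m i ∈ Mset F) ∧ Function.Injective m ∧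
      ∀ j : Fin n, (j : ℕ) < k →
        (∀ i i', pvv m hc j i = pvv m hc j i') ∨ Function.Injective (pvv m hc j) := by
    intro k
    induction k with
    | zero => exact fun _ => ⟨m₀ ∘ e₁, fun i => he₁m i, fun i => hm₀ _,
        hinj₀.comp he₁.injective, fun j hj => absurd hj (Nat.not_lt_zero _)⟩
    | succ k ih =>
      intro hk
      obtain ⟨m, hc, hmem, hinj, hpos⟩ := ih (Nat.le_of_succ_le hk)
      set j₀ : Fin n := ⟨k, hk⟩ with hj₀
      by_cases hcase : ∃ v, ¬ {i | pvv m hc j₀ i = v}.Countable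
      · obtain ⟨v, hv⟩ := hcase
        obtain ⟨e, he, hem, -⟩ := OT.greedy hα hv (fun _ => (0 : Ordinal.{0}))
        refine ⟨m ∘ e, fun i => hc (e i), fun i => hmem _, hinj.comp he.injective, ?_⟩
        intro j hj
        rcases Nat.lt_succ_iff_lt_or_eq.1 hj with hj' | hj'
        · rcases hpos j hj' with hconst | hinjj
          · exact Or.inl (fun i i' => hconst (e i) (e i'))
          · exact Or.inr (fun i i' hii => he.injective (hinjj hii))
        · left
          intro i i'
          have hji : j = j₀ := Fin.ext hj'
          rw [hji]
          show pvv m hc j₀ (e i) = pvv m hc j₀ (e i')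
          have h1 : pvv m hc j₀ (e i) = v := hem i
          have h2 : pvv m hc j₀ (e i') = v := hem i'
          rw [h1, h2]
      · push_neg at hcase
        set f := pvv m hc j₀ with hf
        have hne : Nonempty (OT α) := OT.nonempty hα
        set rep : Idx lam → OT α := fun v =>
          if h : ∃ i, f i = v then h.choose else Classical.arbitrary _ with hrep
        have hfrep : ∀ i, f (rep (f i)) = f i := by
          intro i
          have h : ∃ i', f i' = f i := ⟨i, rfl⟩
          simp only [hrep, dif_pos h]
          exact h.choose_spec
        set S := {i | rep (f i) = i} with hS
        have hrepS : ∀ i, rep (f i) ∈ S := by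
          intro i
          show rep (f (rep (f i))) = rep (f i)
          rw [hfrep i]
        have hSu : ¬ S.Countable := by
          intro hS'
          refine OT.uncountable hα ?_
          have hcov : (Set.univ : Set (OT α)) ⊆ ⋃ i ∈ S, {j | f j = f i} := by
            intro j _
            exact Set.mem_biUnion (hrepS j) (hfrep j).symm
          exact ((hS'.biUnion (fun i _ => hcase (f i))).mono hcov)
        obtain ⟨e, he, hem, -⟩ := OT.greedy hα hSu (fun _ => (0 : Ordinal.{0}))
        refine ⟨m ∘ e, fun i => hc (e i), fun i => hmem _, hinj.comp he.injective, ?_⟩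
        intro j hj
        rcases Nat.lt_succ_iff_lt_or_eq.1 hj with hj' | hj'
        · rcases hpos j hj' with hconst | hinjj
          · exact Or.inl (fun i i' => hconst (e i) (e i'))
          · exact Or.inr (fun i i' hii => he.injective (hinjj hii))
        · right
          intro i i' hii
          have hji : j = j₀ := Fin.ext hj'
          rw [hji] at hii
          have h1 : rep (f (e i)) = e i := hem i
          have h2 : rep (f (e i')) = e i' := hem i'
          have h3 : f (e i) = f (e i') := hii
          have : e i = e i' := by
            rw [← h1, ← h2, h3]
          exact he.injective this
  obtain ⟨m₂, hc₂, h2mem, h2inj, h2pos⟩ := key2 n le_rfl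
  -- the root coordinates
  have hneO : Nonempty (OT α) := OT.nonempty hα
  set i₀ : OT α := Classical.arbitrary _ with hi₀
  set R : Finset (Idx lam) :=
    (Finset.univ.filter (fun j : Fin n => ∀ i i', pvv m₂ hc₂ j i = pvv m₂ hc₂ j i')).image
      (fun j => pvv m₂ hc₂ j i₀) with hRdef
  have hRmem : ∀ ξ ∈ R, ∀ i, ξ ∈ suppF (m₂ i) := by
    intro ξ hξ i
    obtain ⟨j, hj, hje⟩ := Finset.mem_image.1 hξ
    have hjC := (Finset.mem_filter.1 hj).2
    rw [← hje, hjC i₀ i]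
    exact Finset.orderEmbOfFin_mem _ _ _
  have hroot₂ : ∀ i, ∀ ξ ∈ R, cv (m₂ i) ξ ≠ 0 := fun i ξ hξ => mem_suppF.1 (hRmem ξ hξ i)
  have hoff₂ : ∀ ξ ∉ R, {i | cv (m₂ i) ξ ≠ 0}.Finite := by
    intro ξ hξ
    have hcov : {i | cv (m₂ i) ξ ≠ 0} ⊆ ⋃ j : Fin n, {i | pvv m₂ hc₂ j i = ξ} := by
      intro i hi
      have hmem : ξ ∈ suppF (m₂ i) := mem_suppF.2 hi
      have hrange : ξ ∈ Set.range ((suppF (m₂ i)).orderEmbOfFin (hc₂ i)) := by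
        rw [Finset.range_orderEmbOfFin]
        exact hmem
      obtain ⟨j, hj⟩ := hrange
      exact Set.mem_iUnion.2 ⟨j, hj⟩
    refine Set.Finite.subset (Set.finite_iUnion (fun j => ?_)) hcov
    rcases h2pos j j.isLt with hconst | hinjj
    · refine Set.Finite.subset (Set.finite_empty) ?_
      intro i hi
      exfalso
      apply hξ
      rw [hRdef]
      refine Finset.mem_image.2 ⟨j, Finset.mem_filter.2 ⟨Finset.mem_univ _, hconst⟩, ?_⟩
      exact (hconst i₀ i).trans hi
    · apply Set.Subsingleton.finite
      intro a ha b hb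
      exact hinjj (ha.trans hb.symm)
  -- Step 3: monotone and bounded root coordinates
  have key3 : ∀ L : Finset (Idx lam), ∃ m : OT α → Sp lam γ,
      (∀ i, m i ∈ Mset F) ∧ Function.Injective m ∧
      (∀ i, ∀ ξ ∈ R, cv (m i) ξ ≠ 0) ∧ (∀ ξ ∉ R, {i | cv (m i) ξ ≠ 0}.Finite) ∧
      (∀ ξ ∈ L, (∀ i j : OT α, i ≤ j → cv (m i) ξ ≤ cv (m j) ξ) ∧
        (∀ s : Set (OT α), s.Countable → ∃ c, c < γ ξ ∧ ∀ μ ∈ s, cv (m μ) ξ ≤ c)) := by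
    intro L
    induction L using Finset.induction_on with
    | empty => exact ⟨m₂, h2mem, h2inj, hroot₂, hoff₂,
        fun ξ hξ => absurd hξ (Finset.notMem_empty _)⟩
    | @insert a L ha ih =>
      obtain ⟨m, hmem, hinj, hroot, hoff, hL⟩ := ih
      have hstep : ∃ (e : OT α → OT α), StrictMono e ∧
          (∀ s : Set (OT α), s.Countable → ∃ c, c < γ a ∧ ∀ μ ∈ s, cv (m (e μ)) a ≤ c) := by
        by_cases hcb : ∃ c, c < γ a ∧ ¬ {i | cv (m i) a ≤ c}.Countable
        · obtain ⟨c, hcγ, hcu⟩ := hcb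
          obtain ⟨e, he, hem, -⟩ := OT.greedy hα hcu (fun _ => (0 : Ordinal.{0}))
          exact ⟨e, he, fun s _ => ⟨c, hcγ, fun μ _ => hem μ⟩⟩
        · push_neg at hcb
          refine ⟨id, strictMono_id, fun s hs => ?_⟩
          by_contra hno
          push_neg at hno
          refine OT.uncountable hα ?_
          have hcov : (Set.univ : Set (OT α)) ⊆ ⋃ μ ∈ s, {i | cv (m i) a ≤ cv (m μ) a} := by
            intro i _
            obtain ⟨μ, hμs, hμ⟩ := hno (cv (m i) a) (cv_lt _ _)
            exact Set.mem_biUnion hμs (le_of_lt hμ)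
          exact (Set.Countable.biUnion hs (fun μ _ => hcb _ (cv_lt _ _))).mono hcov
      obtain ⟨e, he, hbnda⟩ := hstep
      obtain ⟨e', he', -, hg⟩ := OT.greedy hα (OT.uncountable hα) (fun i => cv (m (e i)) a)
      set m' : OT α → Sp lam γ := fun i => m (e (e' i)) with hm'
      have hinj' : Function.Injective m' := fun i j hij =>
        he'.injective (he.injective (hinj hij))
      refine ⟨m', fun i => hmem _, hinj', fun i ξ hξ => hroot _ ξ hξ, ?_, ?_⟩
      · intro ξ hξ
        have hpre : {i | cv (m' i) ξ ≠ 0} = (fun i => e (e' i)) ⁻¹' {j | cv (m j) ξ ≠ 0} := rfl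
        rw [hpre]
        exact Set.Finite.preimage
          ((he.injective.comp he'.injective).injOn) (hoff ξ hξ)
      · intro ξ hξ
        rcases Finset.mem_insert.1 hξ with rfl | hξL
        · constructor
          · intro i j hij
            exact hg i j hij
          · intro s hs
            obtain ⟨c, hcγ, hc⟩ := hbnda (e' '' s) (hs.image _)
            exact ⟨c, hcγ, fun μ hμ => hc (e' μ) (Set.mem_image_of_mem _ hμ)⟩
        · rcases hL ξ hξL with ⟨hm1, hm2⟩
          constructor
          · intro i j hij
            exact hm1 _ _ (he.monotone (he'.monotone hij))
          · intro s hs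
            obtain ⟨c, hcγ, hc⟩ := hm2 ((fun i => e (e' i)) '' s) (hs.image _)
            exact ⟨c, hcγ, fun μ hμ => hc _ (Set.mem_image_of_mem _ hμ)⟩
  obtain ⟨m₃, h3mem, h3inj, h3root, h3off, h3L⟩ := key3 R
  exact ⟨⟨m₃, R, h3mem, h3inj, h3root, h3off,
    fun ξ hξ => (h3L ξ hξ).1, fun ξ hξ => (h3L ξ hξ).2⟩⟩

/-! ### The main recursion -/

structure Gd (F : Set (Set (Sp lam γ))) (P : Pack lam γ F α) (hγ : ∀ ξ, γ ξ ≠ 0) where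
  E : Set (Sp lam γ)
  S : Set (OT α)
  l : OT α
  hE : E ∈ F
  hS : ¬ S.Countable
  hme : ∀ s ∈ S, P.m s ∈ E
  hz : zpt hγ P l ∉ E
  hl : ∃ β, β < l

theorem gd_step (hFc : F.Countable) (P : Pack lam γ F α)
    (hγ : ∀ ξ, γ ξ ≠ 0) (hα : ¬(Set.univ : Set α).Countable)
    (i : OT α) (prior : ∀ j, j < i → Gd F P hγ) :
    ∃ d : Gd F P hγ, ∀ j (h : j < i), ∀ β, β < d.l → ∃ s ∈ (prior j h).S, β < s ∧ s < d.l := by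
  classical
  haveI hne := OT.nonempty hα
  haveI : Countable {j : OT α // j < i} := (OT.countable_Iio i).to_subtype
  set fam : Option {j : OT α // j < i} → Set (OT α) :=
    fun o => Option.elim o Set.univ (fun j => (prior j.1 j.2).S) with hfam
  have hfamU : ∀ o, ¬ (fam o).Countable := by
    rintro (_ | j)
    · exact OT.uncountable hα
    · exact (prior j.1 j.2).hS
  obtain ⟨en, hen⟩ := exists_surjective_nat (Option {j : OT α // j < i})
  set cf : ℕ → OT α → OT α :=
    fun k ck => (OT.unbounded hα (hfamU (en (Nat.unpair k).1)) ck).choose with hcf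
  set c : ℕ → OT α := fun k => Nat.rec (Classical.arbitrary _) cf k with hcdef
  have hcsucc : ∀ k, c (k + 1) = cf k (c k) := fun k => rfl
  have hc1 : ∀ k, c k < c (k + 1) := by
    intro k
    rw [hcsucc k]
    exact (OT.unbounded hα (hfamU (en (Nat.unpair k).1)) (c k)).choose_spec.2
  have hc2 : ∀ k, c (k + 1) ∈ fam (en (Nat.unpair k).1) := by
    intro k
    rw [hcsucc k]
    exact (OT.unbounded hα (hfamU (en (Nat.unpair k).1)) (c k)).choose_spec.1
  have hcmono : StrictMono c := strictMono_nat_of_lt_succ hc1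
  have hub : {b : OT α | ∀ k, c k < b}.Nonempty := by
    obtain ⟨b, hb⟩ := OT.exists_gt hα (Set.range c) (Set.countable_range c)
    exact ⟨b, fun k => hb _ ⟨k, rfl⟩⟩
  set l := (wellFounded_lt (α := OT α)).min {b | ∀ k, c k < b} hub with hldef
  have hlUB : ∀ k, c k < l := WellFounded.min_mem _ _ hub
  have hlmin : ∀ β, β < l → ∃ k, β ≤ c k := by
    intro β hβ
    by_contra h
    push_neg at h
    exact (WellFounded.not_lt_min (wellFounded_lt (α := OT α)) _
      (show β ∈ {b | ∀ k, c k < b} from fun k => h k)) hβ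
  have hstar : ∀ (o : Option {j : OT α // j < i}) β, β < l → ∃ s ∈ fam o, β < s ∧ s < l := by
    intro o β hβ
    obtain ⟨k₀, hk₀⟩ := hlmin β hβ
    obtain ⟨a, ha⟩ := hen o
    set k := Nat.pair a k₀ with hk
    have hun : (Nat.unpair k).1 = a := by rw [hk, Nat.unpair_pair]
    refine ⟨c (k + 1), ?_, ?_, hlUB (k + 1)⟩
    · have h2 := hc2 k
      rwa [hun, ha] at h2
    · have hk₀k : k₀ ≤ k := Nat.right_le_pair a k₀
      calc β ≤ c k₀ := hk₀
        _ < c (k + 1) := hcmono (Nat.lt_succ_of_le hk₀k)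
  have hl0 : ∃ β, β < l := ⟨c 0, hlUB 0⟩
  set z := zpt hγ P l with hzdef
  set U := {μ : OT α | l < μ ∧ P.m μ ≠ z} with hU
  have hUu : ¬ U.Countable := by
    intro hUc
    refine OT.uncountable hα ?_
    have hsing : {μ : OT α | P.m μ = z}.Subsingleton := by
      intro a ha b hb
      exact P.hinj (ha.trans hb.symm)
    have hcov : (Set.univ : Set (OT α)) ⊆ U ∪ ({μ | μ ≤ l} ∪ {μ | P.m μ = z}) := by
      intro μ _
      by_cases h1 : μ ≤ l
      · exact Or.inr (Or.inl h1)
      by_cases h2 : P.m μ = z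
      · exact Or.inr (Or.inr h2)
      · exact Or.inl ⟨lt_of_not_ge h1, h2⟩
    exact ((hUc.union ((OT.countable_Iic l).union hsing.countable)).mono hcov)
  have hwit : ∀ μ ∈ U, ∃ C ∈ F, P.m μ ∈ C ∧ z ∉ C := by
    intro μ hμ
    refine P.hmem μ z ⟨zlec hγ P (le_of_lt hμ.1), ?_⟩
    exact fun h => hμ.2 h.symm
  set wc : OT α → Set (Sp lam γ) :=
    fun μ => if h : μ ∈ U then (hwit μ h).choose else ∅ with hwc
  have hwcF : ∀ μ, ∀ h : μ ∈ U, wc μ ∈ F ∧ P.m μ ∈ wc μ ∧ z ∉ wc μ := by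
    intro μ h
    have hh := (hwit μ h).choose_spec
    simp only [hwc, dif_pos h]
    exact ⟨hh.1, hh.2.1, hh.2.2⟩
  obtain ⟨C, hCF, hCu⟩ : ∃ C ∈ F, ¬ {μ | μ ∈ U ∧ wc μ = C}.Countable := by
    by_contra h
    push_neg at h
    refine hUu ?_
    have hcov : U ⊆ ⋃ C ∈ F, {μ | μ ∈ U ∧ wc μ = C} := by
      intro μ hμ
      exact Set.mem_biUnion (hwcF μ hμ).1 ⟨hμ, rfl⟩
    exact ((hFc.biUnion h).mono hcov)
  have hSne : {μ | μ ∈ U ∧ wc μ = C}.Nonempty := by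
    rcases Set.eq_empty_or_nonempty {μ | μ ∈ U ∧ wc μ = C} with h | h
    · exact absurd (h ▸ Set.countable_empty) hCu
    · exact h
  obtain ⟨μ₀, hμ₀⟩ := hSne
  refine ⟨⟨C, {μ | μ ∈ U ∧ wc μ = C}, l, hCF, hCu, ?_, ?_, hl0⟩, ?_⟩
  · intro s hs
    have hh := (hwcF s hs.1).2.1
    rwa [hs.2] at hh
  · have hh := (hwcF μ₀ hμ₀.1).2.2
    intro hzC
    exact hh (hμ₀.2 ▸ hzC)
  · intro j h β hβ
    exact hstar (some ⟨j, h⟩) β hβ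

def Plain (X : Type*) := X

theorem Mset_countable (hγ : ∀ ξ, γ ξ ≠ 0)
    (hFc : F.Countable) (hFcl : ∀ C ∈ F, IsClosed C) : (Mset F).Countable := by
  classical
  by_contra hM
  obtain ⟨lo, wo⟩ := exists_wellOrder (Plain (↥(Mset F)))
  letI := lo
  haveI := wo
  let unwrap : Plain (↥(Mset F)) → Sp lam γ := fun y => (show ↥(Mset F) from y).1
  have hα : ¬(Set.univ : Set (Plain (↥(Mset F)))).Countable := by
    intro h
    apply hM
    have h2 := h.image unwrap
    refine h2.mono ?_
    intro y hy
    exact ⟨(⟨y, hy⟩ : ↥(Mset F)), Set.mem_univ _, rfl⟩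
  have hunwrap_inj : Function.Injective unwrap := fun a b hab => Subtype.val_injective hab
  obtain ⟨P⟩ := exists_pack F hα (fun i => unwrap i.1)
    (fun i => (show ↥(Mset F) from i.1).2)
    (hunwrap_inj.comp Subtype.val_injective)
  let step : ∀ i : OT (Plain (↥(Mset F))), (∀ j, j < i → Gd F P hγ) → Gd F P hγ :=
    fun i rec => (gd_step hFc P hγ hα i rec).choose
  let Φ : OT (Plain (↥(Mset F))) → Gd F P hγ := (wellFounded_lt).fix step
  have hΦ : ∀ i, Φ i = step i (fun j _ => Φ j) :=
    fun i => WellFounded.fix_eq _ step i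
  have hcross : ∀ i j, ∀ h : j < i, ∀ β, β < (Φ i).l →
      ∃ s ∈ (Φ j).S, β < s ∧ s < (Φ i).l := by
    intro i j h β hβ
    have hspec := (gd_step hFc P hγ hα i (fun j _ => Φ j)).choose_spec j h β
    rw [hΦ i] at hβ ⊢
    exact hspec hβ
  have hzin : ∀ i j, ∀ h : j < i, zpt hγ P (Φ i).l ∈ (Φ j).E := by
    intro i j h
    refine zpt_mem_closed hγ P (hFcl _ (Φ j).hE)
      (T := {s | s ∈ (Φ j).S ∧ s < (Φ i).l}) (fun t ht => ht.2) ?_ (Φ i).hl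
      (fun t ht => (Φ j).hme t ht.1)
    intro β hβ
    obtain ⟨s, hs, h1, h2⟩ := hcross i j h β hβ
    exact ⟨s, ⟨hs, h2⟩, h1⟩
  have hEne : ∀ i j, j < i → (Φ i).E ≠ (Φ j).E := by
    intro i j h heq
    exact (Φ i).hz (by rw [heq]; exact hzin i j h)
  have hinjE : Function.Injective (fun i => (⟨(Φ i).E, (Φ i).hE⟩ : ↥F)) := by
    intro i j hij
    have hval : (Φ i).E = (Φ j).E := congrArg Subtype.val hij
    by_contra hne'
    rcases lt_or_gt_of_ne hne' with h | h
    · exact hEne j i h hval.symm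
    · exact hEne i j h hval
  haveI : Countable ↥F := hFc.to_subtype
  haveI : Countable (OT (Plain (↥(Mset F)))) := hinjE.countable
  exact OT.uncountable hα Set.countable_univ

end Space

end ESProof

/-- Let `λ` be a cardinal and `γ_ξ` (for ordinals `ξ < λ`) be
nonzero ordinals with their order topologies.  Then the σ-product
`σ(∏_{ξ<λ} γ_ξ, 0)`, i.e. the subspace of points with finite support, is
exponentially separable. -/
theorem sigmaProduct_exponentiallySeparable
    (lam : Cardinal) (γ : ↥(Set.Iio lam.ord) → Ordinal)
    (hγ : ∀ ξ, γ ξ ≠ 0) :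
    ExponentiallySeparable
      ↥{x : Π ξ : ↥(Set.Iio lam.ord), ↥(Set.Iio (γ ξ)) |
          {ξ | (x ξ : Ordinal) ≠ 0}.Finite} := by
  intro F hFc hFcl
  refine ⟨ESProof.Mset F, ESProof.Mset_countable hγ hFc hFcl, ?_⟩
  intro G hGF hGne
  obtain ⟨x, hx⟩ := hGne
  have hDne : {y | ∀ C ∈ F, x ∈ C → y ∈ C}.Nonempty := ⟨x, fun C _ h => h⟩
  set a := (ESProof.ltc_wf (lam := lam) (γ := γ)).min {y | ∀ C ∈ F, x ∈ C → y ∈ C} hDne with ha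
  have haD : ∀ C ∈ F, x ∈ C → a ∈ C := WellFounded.min_mem _ _ hDne
  have haM : a ∈ ESProof.Mset F := by
    intro b hba
    have hbD : ¬ ∀ C ∈ F, x ∈ C → b ∈ C := by
      intro hbD
      exact WellFounded.not_lt_min (ESProof.ltc_wf (lam := lam) (γ := γ)) _ (show b ∈ {y | ∀ C ∈ F, x ∈ C → y ∈ C} from hbD) hba
    push_neg at hbD
    obtain ⟨C, hCF, hxC, hbC⟩ := hbD
    exact ⟨C, hCF, haD C hCF hxC, hbC⟩
  refine ⟨a, haM, ?_⟩
  refine Set.mem_sInter.2 (fun C hCG => ?_)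
  exact haD C (hGF hCG) (Set.mem_sInter.1 hx C hCG)
end
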